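/- arXiv:1905.07846 — 7 statements merged into one kernel-verified Lean document; each statement's English description precedes it below -/
import Mathlib

section
/- Let H ∈ (0,1). Then Θ(x) → 1/(H+1) as x → ∞. -/
open MeasureTheory Filter Set

open intervalIntegral in
private lemma int_shift_add' (q c v : ℝ) (hq : (-1:ℝ) < q) :
    ∫ s in (0:ℝ)..v, (s + c) ^ q = ((v + c) ^ (q+1) - c ^ (q+1)) / (q+1) := by
  rw [intervalIntegral.integral_comp_add_right (fun t => t ^ q) c,
    integral_rpow (Or.inl hq)]
  norm_num

open intervalIntegral in
private lemma int_shift_sub' (q d v : ℝ) (hq : (-1:ℝ) < q) :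
    ∫ s in (0:ℝ)..v, (d - s) ^ q = (d ^ (q+1) - (d - v) ^ (q+1)) / (q+1) := by
  rw [intervalIntegral.integral_comp_sub_left (fun t => t ^ q) d,
    integral_rpow (Or.inl hq), sub_zero]

open intervalIntegral in
private lemma int_rpow01 (q : ℝ) (hq : (-1:ℝ) < q) :
    ∫ s in (0:ℝ)..1, s ^ q = 1 / (q+1) := by
  rw [integral_rpow (Or.inl hq), Real.one_rpow, Real.zero_rpow (by linarith), sub_zero]

private lemma cont_abs_rpow {a : ℝ} (ha : 0 ≤ a) : Continuous fun t : ℝ => |t| ^ a :=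
  continuous_abs.rpow_const (fun _ => Or.inr ha)

private lemma ii_rpow {g : ℝ → ℝ} (hg : Continuous g) (q : ℝ) (hq : 0 ≤ q) (e f : ℝ) :
    IntervalIntegrable (fun u => (g u) ^ q) volume e f :=
  (hg.rpow_const (fun _ => Or.inr hq)).intervalIntegrable _ _

open intervalIntegral in
private lemma int_abs_sub {a u : ℝ} (ha : 0 < a) (hu0 : 0 ≤ u) (hu1 : u ≤ 1) :
    ∫ s in (0:ℝ)..1, |u - s| ^ a = (u ^ (a+1) + (1-u) ^ (a+1)) / (a+1) := by
  have h1 : IntervalIntegrable (fun s => |u - s| ^ a) volume 0 u :=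
    ((cont_abs_rpow ha.le).comp (continuous_const.sub continuous_id)).intervalIntegrable _ _
  have h2 : IntervalIntegrable (fun s => |u - s| ^ a) volume u 1 :=
    ((cont_abs_rpow ha.le).comp (continuous_const.sub continuous_id)).intervalIntegrable _ _
  rw [← intervalIntegral.integral_add_adjacent_intervals h1 h2]
  have e1 : ∫ s in (0:ℝ)..u, |u - s| ^ a = u ^ (a+1) / (a+1) := by
    rw [intervalIntegral.integral_congr (g := fun s => (u - s) ^ a)
      (fun s hs => by
        rw [uIcc_of_le hu0] at hs
        rw [abs_of_nonneg (by linarith [hs.2] : (0:ℝ) ≤ u - s)])]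
    rw [intervalIntegral.integral_comp_sub_left (fun t => t ^ a) u, sub_self, sub_zero,
      integral_rpow (Or.inl (by linarith)), Real.zero_rpow (by linarith), sub_zero]
  have e2 : ∫ s in u..(1:ℝ), |u - s| ^ a = (1-u) ^ (a+1) / (a+1) := by
    rw [intervalIntegral.integral_congr (g := fun s => (s - u) ^ a)
      (fun s hs => by
        rw [uIcc_of_le hu1] at hs
        rw [abs_of_nonpos (by linarith [hs.1] : u - s ≤ 0), neg_sub])]
    rw [intervalIntegral.integral_comp_sub_right (fun t => t ^ a) u, sub_self,
      integral_rpow (Or.inl (by linarith)), Real.zero_rpow (by linarith), sub_zero]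
  rw [e1, e2]; ring

private lemma inner_eval {a x u : ℝ} (ha : 0 < a) (hx : 2 ≤ x) (hu0 : 0 ≤ u) (hu1 : u ≤ 1) :
    (∫ s in (0:ℝ)..1,
      (x ^ a + 2 * u ^ a + |s - u + x| ^ a - (u + x) ^ a - |u - x| ^ a - |u - s| ^ a))
    = x ^ a + 2 * u ^ a - (u + x) ^ a - (x - u) ^ a
        + (1/(a+1)) * (x + 1 - u) ^ (a+1) - (1/(a+1)) * (x - u) ^ (a+1)
        - (1/(a+1)) * u ^ (a+1) - (1/(a+1)) * (1 - u) ^ (a+1) := by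
  have hC : ∀ s ∈ uIcc (0:ℝ) 1,
      x ^ a + 2 * u ^ a + |s - u + x| ^ a - (u + x) ^ a - |u - x| ^ a - |u - s| ^ a
      = ((x ^ a + 2 * u ^ a - (u + x) ^ a - (x - u) ^ a) + (s + (x - u)) ^ a) - |u - s| ^ a := by
    intro s hs
    rw [uIcc_of_le (by norm_num : (0:ℝ) ≤ 1)] at hs
    rw [abs_of_nonneg (by linarith [hs.1] : (0:ℝ) ≤ s - u + x),
      abs_of_nonpos (by linarith : u - x ≤ 0)]
    ring_nf
  rw [intervalIntegral.integral_congr hC]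
  have i1 : IntervalIntegrable
      (fun s => (x ^ a + 2 * u ^ a - (u + x) ^ a - (x - u) ^ a) + (s + (x - u)) ^ a)
      volume 0 1 :=
    (continuous_const.add ((continuous_id.add continuous_const).rpow_const
      (fun _ => Or.inr ha.le))).intervalIntegrable _ _
  have i2 : IntervalIntegrable (fun s => |u - s| ^ a) volume 0 1 :=
    ((cont_abs_rpow ha.le).comp (continuous_const.sub continuous_id)).intervalIntegrable _ _
  have i3 : IntervalIntegrable (fun s : ℝ => (s + (x - u)) ^ a) volume 0 1 := by
    apply Continuous.intervalIntegrable
    exact (continuous_id.add continuous_const).rpow_const (fun _ => Or.inr ha.le)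
  rw [intervalIntegral.integral_sub i1 i2, intervalIntegral.integral_add
    (intervalIntegrable_const) i3,
    intervalIntegral.integral_const, int_shift_add' a (x - u) 1 (by linarith),
    int_abs_sub ha hu0 hu1]
  have : (1:ℝ) + (x - u) = x + 1 - u := by ring
  rw [this]
  simp only [smul_eq_mul]
  ring

private lemma outer_eval {a x : ℝ} (ha : 0 < a) :
    (∫ u in (0:ℝ)..1, (x ^ a + 2 * u ^ a - (u + x) ^ a - (x - u) ^ a
        + (1/(a+1)) * (x + 1 - u) ^ (a+1) - (1/(a+1)) * (x - u) ^ (a+1)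
        - (1/(a+1)) * u ^ (a+1) - (1/(a+1)) * (1 - u) ^ (a+1)))
    = x ^ a + 2/(a+1)
      - ((x+1)^(a+1) - x^(a+1))/(a+1) - (x^(a+1) - (x-1)^(a+1))/(a+1)
      + (((x+1)^(a+2) - x^(a+2))/(a+2)) / (a+1)
      - ((x^(a+2) - (x-1)^(a+2))/(a+2)) / (a+1)
      - (2/(a+2)) / (a+1) := by
  have h1 : (-1:ℝ) < a := by linarith
  have h1' : (-1:ℝ) < a + 1 := by linarith
  have I1 : IntervalIntegrable (fun _ : ℝ => x ^ a) volume 0 1 := intervalIntegrable_const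
  have I2 : IntervalIntegrable (fun u : ℝ => 2 * u ^ a) volume 0 1 :=
    (ii_rpow (g := fun u => u) continuous_id a ha.le 0 1).const_mul 2
  have I3 : IntervalIntegrable (fun u : ℝ => (u + x) ^ a) volume 0 1 :=
    ii_rpow (g := fun u => u + x) (by fun_prop) a ha.le 0 1
  have I4 : IntervalIntegrable (fun u : ℝ => (x - u) ^ a) volume 0 1 :=
    ii_rpow (g := fun u => x - u) (by fun_prop) a ha.le 0 1
  have I5 : IntervalIntegrable (fun u : ℝ => (1/(a+1)) * (x + 1 - u) ^ (a+1)) volume 0 1 :=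
    (ii_rpow (g := fun u => x + 1 - u) (by fun_prop) (a+1) (by linarith) 0 1).const_mul _
  have I6 : IntervalIntegrable (fun u : ℝ => (1/(a+1)) * (x - u) ^ (a+1)) volume 0 1 :=
    (ii_rpow (g := fun u => x - u) (by fun_prop) (a+1) (by linarith) 0 1).const_mul _
  have I7 : IntervalIntegrable (fun u : ℝ => (1/(a+1)) * u ^ (a+1)) volume 0 1 :=
    (ii_rpow (g := fun u => u) continuous_id (a+1) (by linarith) 0 1).const_mul _
  have I8 : IntervalIntegrable (fun u : ℝ => (1/(a+1)) * (1 - u) ^ (a+1)) volume 0 1 :=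
    (ii_rpow (g := fun u => 1 - u) (by fun_prop) (a+1) (by linarith) 0 1).const_mul _
  rw [intervalIntegral.integral_sub ((((((I1.add I2).sub I3).sub I4).add I5).sub I6).sub I7) I8,
    intervalIntegral.integral_sub (((((I1.add I2).sub I3).sub I4).add I5).sub I6) I7,
    intervalIntegral.integral_sub ((((I1.add I2).sub I3).sub I4).add I5) I6,
    intervalIntegral.integral_add (((I1.add I2).sub I3).sub I4) I5,
    intervalIntegral.integral_sub ((I1.add I2).sub I3) I4,
    intervalIntegral.integral_sub (I1.add I2) I3,
    intervalIntegral.integral_add I1 I2,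
    intervalIntegral.integral_const,
    intervalIntegral.integral_const_mul, intervalIntegral.integral_const_mul,
    intervalIntegral.integral_const_mul, intervalIntegral.integral_const_mul,
    intervalIntegral.integral_const_mul]
  have E2 : ∫ u in (0:ℝ)..1, u ^ a = 1 / (a+1) := int_rpow01 a h1
  have E3 : ∫ u in (0:ℝ)..1, (u + x) ^ a = ((x+1)^(a+1) - x^(a+1))/(a+1) := by
    rw [int_shift_add' a x 1 h1, add_comm 1 x]
  have E4 : ∫ u in (0:ℝ)..1, (x - u) ^ a = (x^(a+1) - (x-1)^(a+1))/(a+1) := by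
    rw [int_shift_sub' a x 1 h1]
  have E5 : ∫ u in (0:ℝ)..1, (x + 1 - u) ^ (a+1) = ((x+1)^(a+2) - x^(a+2))/(a+2) := by
    rw [int_shift_sub' (a+1) (x+1) 1 h1', show a+1+1 = a+2 by ring,
      show x+1-(1:ℝ) = x by ring]
  have E6 : ∫ u in (0:ℝ)..1, (x - u) ^ (a+1) = (x^(a+2) - (x-1)^(a+2))/(a+2) := by
    rw [int_shift_sub' (a+1) x 1 h1', show a+1+1 = a+2 by ring]
  have E7 : ∫ u in (0:ℝ)..1, u ^ (a+1) = 1/(a+2) := by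
    rw [int_rpow01 (a+1) h1', show a+1+1 = a+2 by ring]
  have E8 : ∫ u in (0:ℝ)..1, (1 - u) ^ (a+1) = 1/(a+2) := by
    rw [int_shift_sub' (a+1) 1 1 h1', show a+1+1 = a+2 by ring]
    norm_num [Real.one_rpow, Real.zero_rpow (show a+2 ≠ 0 by linarith)]
  rw [E2, E3, E4, E5, E6, E7, E8]
  simp only [smul_eq_mul]
  ring

private lemma rep_eval {a x : ℝ} (ha : 0 < a) (hx : 2 ≤ x) :
    (∫ v in (0:ℝ)..1, v * (2 * x ^ a - (v + x) ^ a - (x - v) ^ a))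
    = x ^ a - ((x+1)^(a+2) - x^(a+2))/(a+2) + x * (((x+1)^(a+1) - x^(a+1))/(a+1))
      - x * ((x^(a+1) - (x-1)^(a+1))/(a+1)) + (x^(a+2) - (x-1)^(a+2))/(a+2) := by
  have h1 : (-1:ℝ) < a := by linarith
  have h1' : (-1:ℝ) < a + 1 := by linarith
  have hcong : ∀ v ∈ uIcc (0:ℝ) 1,
      v * (2 * x ^ a - (v + x) ^ a - (x - v) ^ a)
      = 2 * x ^ a * v - (v + x) ^ (a+1) + x * (v + x) ^ a
          - x * (x - v) ^ a + (x - v) ^ (a+1) := by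
    intro v hv
    rw [uIcc_of_le (by norm_num : (0:ℝ) ≤ 1)] at hv
    rw [Real.rpow_add_one (by nlinarith [hv.1] : v + x ≠ 0) a,
      Real.rpow_add_one (by nlinarith [hv.2] : x - v ≠ 0) a]
    ring
  rw [intervalIntegral.integral_congr hcong]
  have I1 : IntervalIntegrable (fun v : ℝ => 2 * x ^ a * v) volume 0 1 :=
    (continuous_id.intervalIntegrable 0 1).const_mul _
  have I2 : IntervalIntegrable (fun v : ℝ => (v + x) ^ (a+1)) volume 0 1 :=
    ii_rpow (g := fun v => v + x) (by fun_prop) (a+1) (by linarith) 0 1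
  have I3 : IntervalIntegrable (fun v : ℝ => x * (v + x) ^ a) volume 0 1 :=
    (ii_rpow (g := fun v => v + x) (by fun_prop) a ha.le 0 1).const_mul _
  have I4 : IntervalIntegrable (fun v : ℝ => x * (x - v) ^ a) volume 0 1 :=
    (ii_rpow (g := fun v => x - v) (by fun_prop) a ha.le 0 1).const_mul _
  have I5 : IntervalIntegrable (fun v : ℝ => (x - v) ^ (a+1)) volume 0 1 :=
    ii_rpow (g := fun v => x - v) (by fun_prop) (a+1) (by linarith) 0 1
  rw [intervalIntegral.integral_add (((I1.sub I2).add I3).sub I4) I5,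
    intervalIntegral.integral_sub ((I1.sub I2).add I3) I4,
    intervalIntegral.integral_add (I1.sub I2) I3,
    intervalIntegral.integral_sub I1 I2,
    intervalIntegral.integral_const_mul, intervalIntegral.integral_const_mul,
    intervalIntegral.integral_const_mul, integral_id,
    int_shift_add' (a+1) x 1 h1', int_shift_add' a x 1 h1,
    int_shift_sub' a x 1 h1, int_shift_sub' (a+1) x 1 h1',
    show a+1+1 = a+2 by ring, add_comm (1:ℝ) x]
  norm_num
  ring

private lemma closed_id {a x : ℝ} (ha : 0 < a) (hx : 2 ≤ x) :
    (x ^ a + 2/(a+1)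
      - ((x+1)^(a+1) - x^(a+1))/(a+1) - (x^(a+1) - (x-1)^(a+1))/(a+1)
      + (((x+1)^(a+2) - x^(a+2))/(a+2)) / (a+1)
      - ((x^(a+2) - (x-1)^(a+2))/(a+2)) / (a+1)
      - (2/(a+2)) / (a+1)) - 2/(a+2)
    = x ^ a - ((x+1)^(a+2) - x^(a+2))/(a+2) + x * (((x+1)^(a+1) - x^(a+1))/(a+1))
      - x * ((x^(a+1) - (x-1)^(a+1))/(a+1)) + (x^(a+2) - (x-1)^(a+2))/(a+2) := by
  have h3 : x + 1 ≠ 0 := by linarith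
  have h2 : x ≠ 0 := by linarith
  have h1 : x - 1 ≠ 0 := by intro h; rw [sub_eq_zero] at h; linarith
  have ha1 : a + 1 ≠ 0 := by linarith
  have ha2 : a + 1 + 1 ≠ 0 := by linarith
  rw [show a+2 = a+1+1 by ring, Real.rpow_add_one h3 (a+1), Real.rpow_add_one h2 (a+1),
    Real.rpow_add_one h1 (a+1), Real.rpow_add_one h3 a, Real.rpow_add_one h2 a,
    Real.rpow_add_one h1 a]
  field_simp
  ring

private lemma theta_closed {a x : ℝ} (ha : 0 < a) (hx : 2 ≤ x) :
    (∫ u in (0:ℝ)..1, ∫ s in (0:ℝ)..1,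
      (x ^ a + 2 * u ^ a + |s - u + x| ^ a - (u + x) ^ a - |u - x| ^ a - |u - s| ^ a))
      - 2/(a+2)
    = ∫ v in (0:ℝ)..1, v * (2 * x ^ a - (v + x) ^ a - (x - v) ^ a) := by
  rw [intervalIntegral.integral_congr (g := fun u =>
      x ^ a + 2 * u ^ a - (u + x) ^ a - (x - u) ^ a
        + (1/(a+1)) * (x + 1 - u) ^ (a+1) - (1/(a+1)) * (x - u) ^ (a+1)
        - (1/(a+1)) * u ^ (a+1) - (1/(a+1)) * (1 - u) ^ (a+1))
    (fun u hu => by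
      rw [uIcc_of_le (by norm_num : (0:ℝ) ≤ 1)] at hu
      exact inner_eval ha hx hu.1 hu.2)]
  rw [outer_eval ha, rep_eval ha hx]
  exact closed_id ha hx

open intervalIntegral in
private lemma diff_bound {a x t : ℝ} (ha : 0 < a) (ha2 : a < 2) (hx : 2 ≤ x)
    (ht0 : 0 < t) (ht1 : t ≤ 1) :
    ‖(t + x) ^ (a-1) - (x - t) ^ (a-1)‖ ≤ 2 * |a - 1| * (x - 1) ^ (a - 2) := by
  have hx1 : (0:ℝ) < x - 1 := by linarith
  have hrpos : (0:ℝ) ≤ (x - 1) ^ (a - 2) := Real.rpow_nonneg hx1.le _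
  by_cases h1 : a = 1
  · subst h1
    simp [Real.rpow_zero]
  · have hne : a - 1 ≠ 0 := sub_ne_zero.mpr h1
    have h0 : (0:ℝ) ∉ uIcc (x - t) (x + t) := by
      rw [uIcc_of_le (by linarith)]
      intro hmem
      have := hmem.1
      linarith
    have key : (t + x) ^ (a-1) - (x - t) ^ (a-1)
        = (a - 1) * ∫ r in (x-t)..(x+t), r ^ (a-2) := by
      rw [integral_rpow (Or.inr ⟨by intro hc; apply h1; linarith, h0⟩),
        show a-2+1 = a-1 by ring, show t + x = x + t by ring]
      field_simp
    rw [key, norm_mul, Real.norm_eq_abs, Real.norm_eq_abs]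
    have hbd : ‖∫ r in (x-t)..(x+t), r ^ (a-2)‖ ≤ (x - 1) ^ (a - 2) * |(x+t) - (x-t)| := by
      apply intervalIntegral.norm_integral_le_of_norm_le_const
      intro r hr
      rw [uIoc_of_le (by linarith : x - t ≤ x + t)] at hr
      have hr1 : x - 1 ≤ r := by linarith [hr.1]
      rw [Real.norm_eq_abs, abs_of_nonneg (Real.rpow_nonneg (by linarith) _)]
      exact Real.rpow_le_rpow_of_nonpos hx1 hr1 (by linarith)
    have h2t : |(x+t) - (x-t)| = 2 * t := by
      rw [abs_of_nonneg (by linarith)]; ring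
    rw [h2t] at hbd
    calc |a - 1| * |∫ r in (x-t)..(x+t), r ^ (a-2)|
        ≤ |a - 1| * ((x - 1) ^ (a - 2) * (2 * t)) :=
          mul_le_mul_of_nonneg_left hbd (abs_nonneg _)
      _ ≤ 2 * |a - 1| * (x - 1) ^ (a - 2) := by
          nlinarith [mul_nonneg (mul_nonneg (abs_nonneg (a-1)) hrpos)
            (by linarith : (0:ℝ) ≤ 1 - t)]

private lemma D_bound {a x v : ℝ} (ha : 0 < a) (ha2 : a < 2) (hx : 2 ≤ x)
    (hv0 : 0 < v) (hv1 : v ≤ 1) :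
    |2 * x ^ a - (v + x) ^ a - (x - v) ^ a| ≤ 2 * a * |a - 1| * (x - 1) ^ (a - 2) := by
  have hq : (-1:ℝ) < a - 1 := by linarith
  have ii1 : IntervalIntegrable (fun t : ℝ => (t + x) ^ (a-1)) volume 0 v := by
    apply ContinuousOn.intervalIntegrable
    apply ContinuousOn.rpow_const (Continuous.continuousOn (by fun_prop))
    intro t ht
    rw [uIcc_of_le hv0.le] at ht
    exact Or.inl (by nlinarith [ht.1])
  have ii2 : IntervalIntegrable (fun t : ℝ => (x - t) ^ (a-1)) volume 0 v := by
    apply ContinuousOn.intervalIntegrable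
    apply ContinuousOn.rpow_const (Continuous.continuousOn (by fun_prop))
    intro t ht
    rw [uIcc_of_le hv0.le] at ht
    refine Or.inl (by nlinarith [ht.2])
  have key : 2 * x ^ a - (v + x) ^ a - (x - v) ^ a
      = -(a * ∫ t in (0:ℝ)..v, ((t + x) ^ (a-1) - (x - t) ^ (a-1))) := by
    rw [intervalIntegral.integral_sub ii1 ii2, int_shift_add' (a-1) x v hq,
      int_shift_sub' (a-1) x v hq, show a-1+1 = a by ring]
    field_simp
    ring
  rw [key, abs_neg, abs_mul, abs_of_pos ha]
  have hbd : ‖∫ t in (0:ℝ)..v, ((t + x) ^ (a-1) - (x - t) ^ (a-1))‖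
      ≤ (2 * |a - 1| * (x - 1) ^ (a - 2)) * |v - 0| := by
    apply intervalIntegral.norm_integral_le_of_norm_le_const
    intro t ht
    rw [uIoc_of_le hv0.le] at ht
    exact diff_bound ha ha2 hx ht.1 (le_trans ht.2 hv1)
  rw [Real.norm_eq_abs] at hbd
  have hv : |v - (0:ℝ)| = v := by rw [sub_zero, abs_of_pos hv0]
  rw [hv] at hbd
  have hrpos : (0:ℝ) ≤ (x - 1) ^ (a - 2) := Real.rpow_nonneg (by linarith) _
  calc a * |∫ t in (0:ℝ)..v, ((t + x) ^ (a-1) - (x - t) ^ (a-1))|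
      ≤ a * (2 * |a - 1| * (x - 1) ^ (a - 2) * v) := mul_le_mul_of_nonneg_left hbd ha.le
    _ ≤ 2 * a * |a - 1| * (x - 1) ^ (a - 2) := by
        nlinarith [mul_nonneg (mul_nonneg (mul_nonneg ha.le (abs_nonneg (a-1))) hrpos)
          (by linarith : (0:ℝ) ≤ 1 - v)]

/-- The function `Θ(x)` from the paper, for Hurst parameter `H`. -/
noncomputable def Theta (H : ℝ) (x : ℝ) : ℝ :=
  ∫ u in (0:ℝ)..1, ∫ s in (0:ℝ)..1,
    (x ^ (2*H) + 2 * u ^ (2*H) + |s - u + x| ^ (2*H)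
      - (u + x) ^ (2*H) - |u - x| ^ (2*H) - |u - s| ^ (2*H))

theorem stmt4 (H : ℝ) (hH : H ∈ Set.Ioo (0:ℝ) 1) :
    Tendsto (Theta H) atTop (nhds (1 / (H + 1))) := by
  obtain ⟨hH0, hH1⟩ := hH
  have ha : (0:ℝ) < 2 * H := by linarith
  have ha2 : 2 * H < 2 := by linarith
  have hconst : 1 / (H + 1) = 2 / (2 * H + 2) := by
    rw [div_eq_div_iff (by linarith) (by linarith)]; ring
  have hkey : ∀ x : ℝ, 2 ≤ x → Theta H x - 1 / (H + 1)
      = ∫ v in (0:ℝ)..1, v * (2 * x ^ (2*H) - (v + x) ^ (2*H) - (x - v) ^ (2*H)) := by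
    intro x hx
    rw [hconst]
    unfold Theta
    exact theta_closed ha hx
  have hKlim : Tendsto (fun x : ℝ => 2 * (2*H) * |2*H - 1| * (x - 1) ^ (2*H - 2))
      atTop (nhds 0) := by
    have h := tendsto_rpow_neg_atTop (show (0:ℝ) < 2 - 2*H by linarith)
    rw [show -(2 - 2*H) = 2*H - 2 by ring] at h
    have h2 : Tendsto (fun x : ℝ => (x - 1) ^ (2*H - 2)) atTop (nhds 0) := by
      apply h.comp
      simpa [sub_eq_add_neg] using tendsto_atTop_add_const_right atTop (-1) tendsto_id
    simpa using h2.const_mul (2 * (2*H) * |2*H - 1|)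
  have hsq : Tendsto (fun x => Theta H x - 1 / (H + 1)) atTop (nhds 0) := by
    apply squeeze_zero_norm' ?_ hKlim
    filter_upwards [eventually_ge_atTop (2:ℝ)] with x hx
    rw [hkey x hx]
    have hb : ‖∫ v in (0:ℝ)..1, v * (2 * x ^ (2*H) - (v + x) ^ (2*H) - (x - v) ^ (2*H))‖
        ≤ (2 * (2*H) * |2*H - 1| * (x - 1) ^ (2*H - 2)) * |(1:ℝ) - 0| := by
      apply intervalIntegral.norm_integral_le_of_norm_le_const
      intro v hv
      rw [uIoc_of_le (by norm_num : (0:ℝ) ≤ 1)] at hv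
      have hD := D_bound ha ha2 hx hv.1 hv.2
      rw [Real.norm_eq_abs, abs_mul]
      calc |v| * |2 * x ^ (2*H) - (v + x) ^ (2*H) - (x - v) ^ (2*H)|
          ≤ 1 * (2 * (2*H) * |2*H - 1| * (x - 1) ^ (2*H - 2)) := by
            apply mul_le_mul (by rw [abs_of_pos hv.1]; exact hv.2) hD (abs_nonneg _)
            norm_num
        _ = 2 * (2*H) * |2*H - 1| * (x - 1) ^ (2*H - 2) := by ring
    simpa using hb
  have := hsq.add_const (1 / (H + 1))
  simpa using this
end

section
/- Let H ∈ (0,1). Then ∫_0^1 ∫_0^1 [x^{2H} + (x+u−s)^{2H} − (x+u)^{2H} − (x−u)^{2H}] ds du = −(H(2H−1)/2) x^{2H−2} + o(x^{2H−2}) as x → ∞; that is, the difference between the left-hand side and −(H(2H−1)/2) x^{2H−2}, divided by x^{2H−2}, tends to 0 as x → ∞. -/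
/-!
Write `p = 2H`, and let `G`, `F` be the first and second antiderivatives of `y ↦ y ^ p`. Integrating
in `s` and then in `u`, the double integral equals
`x ^ p - (G (x + 1) - G (x - 1)) + (F (x + 1) - 2 F x + F (x - 1))`.
By homogeneity this is `x ^ (p + 2) R (1 / x) / ((p + 1) (p + 2))`, where for `Φ a = (1 + a) ^ (p + 2)`
`R a = Φ a + Φ (-a) - 2 Φ 0 - a (Φ' a - Φ' (-a)) + a ^ 2 Φ'' 0`.
Since `R' a = -a (Φ'' a + Φ'' (-a) - 2 Φ'' 0)`, L'Hôpital's rule reduces `R a / a ^ 4` to a second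
symmetric difference quotient of `Φ''`, so `R a / a ^ 4 → -Φ'''' 0 / 4 = -(p + 2) (p + 1) p (p - 1) / 4`.
-/

open MeasureTheory Filter Set Topology

theorem HasDerivAt.comp_neg {f : ℝ → ℝ} {f' x : ℝ} (hf : HasDerivAt f f' (-x)) :
    HasDerivAt (fun x => f (-x)) (-f') x := by
  simpa using HasDerivAt.comp_const_sub (f := f) 0 x (by rwa [zero_sub])

theorem tendsto_neg_nhds_zero : Tendsto (fun a : ℝ => -a) (𝓝 0) (𝓝 0) := by
  simpa using tendsto_neg (0 : ℝ)

theorem tendsto_symmSecondDiff_div_sq {φ φ₁ : ℝ → ℝ} {c : ℝ}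
    (hφ : ∀ᶠ a in 𝓝 0, HasDerivAt φ (φ₁ a) a) (hφ₁ : HasDerivAt φ₁ c 0) :
    Tendsto (fun a => (φ a + φ (-a) - 2 * φ 0) / a ^ 2) (𝓝[≠] 0) (𝓝 c) := by
  have hψ : HasDerivAt (fun a => φ₁ a - φ₁ (-a)) (c + c) 0 :=
    (hφ₁.sub (HasDerivAt.comp_neg (x := 0) (by rwa [neg_zero]))).congr_deriv (by ring)
  refine HasDerivAt.lhopital_zero_nhdsNE (f' := fun a => φ₁ a - φ₁ (-a)) (g' := fun a => 2 * a)
    ?_ ?_ ?_ ?_ ?_ ?_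
  · filter_upwards [nhdsWithin_le_nhds hφ,
      nhdsWithin_le_nhds (tendsto_neg_nhds_zero.eventually hφ)] with a ha hna
    exact ((ha.add hna.comp_neg).sub_const (2 * φ 0)).congr_deriv (by ring)
  · exact Eventually.of_forall fun a => by simpa using hasDerivAt_pow 2 a
  · filter_upwards [self_mem_nhdsWithin] with a (ha : a ≠ 0) using by positivity
  · have hcont : ContinuousAt φ 0 := hφ.self_of_nhds.continuousAt
    have := (hcont.tendsto.add (hcont.tendsto.comp tendsto_neg_nhds_zero)).sub_const (2 * φ 0)
    simpa [two_mul] using this.mono_left nhdsWithin_le_nhds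
  · exact ((continuous_pow 2).tendsto' 0 0 (by simp)).mono_left nhdsWithin_le_nhds
  · have := hψ.tendsto_slope_zero.div_const 2
    rw [← two_mul, mul_div_cancel_left₀ _ two_ne_zero] at this
    refine this.congr' (Eventually.of_forall fun a => ?_)
    simp only [zero_add, neg_zero, sub_self, sub_zero, smul_eq_mul]
    field_simp

theorem tendsto_symmFourthRemainder_div_pow_four {Φ Φ₁ Φ₂ Φ₃ : ℝ → ℝ} {c : ℝ}
    (hΦ : ∀ᶠ a in 𝓝 0, HasDerivAt Φ (Φ₁ a) a) (hΦ₁ : ∀ᶠ a in 𝓝 0, HasDerivAt Φ₁ (Φ₂ a) a)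
    (hΦ₂ : ∀ᶠ a in 𝓝 0, HasDerivAt Φ₂ (Φ₃ a) a) (hΦ₃ : HasDerivAt Φ₃ c 0) :
    Tendsto (fun a => (Φ a + Φ (-a) - 2 * Φ 0 - a * (Φ₁ a - Φ₁ (-a)) + a ^ 2 * Φ₂ 0) / a ^ 4)
      (𝓝[≠] 0) (𝓝 (-c / 4)) := by
  refine HasDerivAt.lhopital_zero_nhdsNE
    (f' := fun a => -a * (Φ₂ a + Φ₂ (-a) - 2 * Φ₂ 0)) (g' := fun a => 4 * a ^ 3) ?_ ?_ ?_ ?_ ?_ ?_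
  · filter_upwards [nhdsWithin_le_nhds hΦ, nhdsWithin_le_nhds (tendsto_neg_nhds_zero.eventually hΦ),
      nhdsWithin_le_nhds hΦ₁, nhdsWithin_le_nhds (tendsto_neg_nhds_zero.eventually hΦ₁)]
      with a h₀ hn₀ h₁ hn₁
    have := (((h₀.fun_add hn₀.comp_neg).sub_const (2 * Φ 0)).fun_sub
      ((hasDerivAt_id' a).fun_mul (h₁.fun_sub hn₁.comp_neg))).fun_add
      ((hasDerivAt_pow 2 a).mul_const (Φ₂ 0))
    exact this.congr_deriv (by push_cast; ring)
  · exact Eventually.of_forall fun a => by simpa using hasDerivAt_pow 4 a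
  · filter_upwards [self_mem_nhdsWithin] with a (ha : a ≠ 0) using by positivity
  · have hc₀ : ContinuousAt Φ 0 := hΦ.self_of_nhds.continuousAt
    have hc₁ : ContinuousAt Φ₁ 0 := hΦ₁.self_of_nhds.continuousAt
    have := ((hc₀.tendsto.add (hc₀.tendsto.comp tendsto_neg_nhds_zero)).sub_const (2 * Φ 0)).sub
      (tendsto_id.mul (hc₁.tendsto.sub (hc₁.tendsto.comp tendsto_neg_nhds_zero)))
    have := this.add (((continuous_pow 2).tendsto 0).mul_const (Φ₂ 0))
    simpa [two_mul] using this.mono_left nhdsWithin_le_nhds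
  · exact ((continuous_pow 4).tendsto' 0 0 (by simp)).mono_left nhdsWithin_le_nhds
  · refine ((tendsto_symmSecondDiff_div_sq hΦ₂ hΦ₃).neg.div_const 4).congr' ?_
    filter_upwards [self_mem_nhdsWithin] with a (ha : a ≠ 0)
    field_simp

noncomputable def rpowRemainder (q a : ℝ) : ℝ :=
  (1 + a) ^ q + (1 - a) ^ q - 2 - q * a * ((1 + a) ^ (q - 1) - (1 - a) ^ (q - 1))
    + q * (q - 1) * a ^ 2

theorem tendsto_rpowRemainder_div_pow_four (q : ℝ) :
    Tendsto (fun a => rpowRemainder q a / a ^ 4) (𝓝[≠] 0)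
      (𝓝 (-(q * (q - 1) * (q - 2) * (q - 3)) / 4)) := by
  have hd (k r : ℝ) : ∀ᶠ a in 𝓝 (0 : ℝ),
      HasDerivAt (fun a => k * (1 + a) ^ r) (k * r * (1 + a) ^ (r - 1)) a := by
    filter_upwards [Ioi_mem_nhds (by norm_num : (-1 : ℝ) < 0)] with a (ha : -1 < a)
    exact ((((hasDerivAt_id' a).const_add 1).rpow_const (Or.inl (by linarith))).const_mul
      k).congr_deriv (by ring)
  have := tendsto_symmFourthRemainder_div_pow_four (hd 1 q) (hd (1 * q) (q - 1))
    (hd (1 * q * (q - 1)) (q - 1 - 1)) (hd (1 * q * (q - 1) * (q - 1 - 1)) (q - 1 - 1 - 1)).self_of_nhds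
  convert this using 2
  · simp only [rpowRemainder, ← sub_eq_add_neg, add_zero, Real.one_rpow]
    ring
  · simp only [add_zero, Real.one_rpow]
    ring

theorem integral_unitSquare_eq_of_hasDerivAt {f G F : ℝ → ℝ} (hf : Continuous f)
    (hG : ∀ y, HasDerivAt G (f y) y) (hF : ∀ y, HasDerivAt F (G y) y) (x : ℝ) :
    ∫ u in (0:ℝ)..1, ∫ s in (0:ℝ)..1, (f x + f (x + u - s) - f (x + u) - f (x - u)) =
      f x - (G (x + 1) - G (x - 1)) + (F (x + 1) - 2 * F x + F (x - 1)) := by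
  have hGc : Continuous G := continuous_iff_continuousAt.2 fun y => (hG y).continuousAt
  have inner (u : ℝ) : ∫ s in (0:ℝ)..1, (f x + f (x + u - s) - f (x + u) - f (x - u)) =
      f x - f (x + u) - f (x - u) + (G (x + u) - G (x + u - 1)) := by
    rw [intervalIntegral.integral_eq_sub_of_hasDerivAt
      (f := fun s => (f x - f (x + u) - f (x - u)) * s - G (x + u - s))
      (fun s _ => (((hasDerivAt_id' s).const_mul _).sub
        ((hG _).comp_const_sub (x + u) s)).congr_deriv (by ring))
      (by apply Continuous.intervalIntegrable; fun_prop)]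
    simp only [sub_zero]
    ring
  simp_rw [inner]
  rw [intervalIntegral.integral_eq_sub_of_hasDerivAt
    (f := fun u => f x * u - G (x + u) + G (x - u) + (F (x + u) - F (x + u - 1)))
    (fun u _ => ((((hasDerivAt_id' u).const_mul _).sub ((hG _).comp_const_add x u)).add
      ((hG _).comp_const_sub x u) |>.add (((hF _).comp_const_add x u).sub
        ((hF _).comp_sub_const (x + u) 1 |>.comp_const_add x u))).congr_deriv (by ring))
    (by apply Continuous.intervalIntegrable; fun_prop)]
  simp only [add_zero, sub_zero, add_sub_cancel_right]
  ring

theorem hasDerivAt_rpow_add_one_div {p : ℝ} (hp : 0 ≤ p) (y : ℝ) :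
    HasDerivAt (fun y => y ^ (p + 1) / (p + 1)) (y ^ p) y := by
  have := (Real.hasDerivAt_rpow_const (x := y) (Or.inr (by linarith : 1 ≤ p + 1))).div_const (p + 1)
  rwa [add_sub_cancel_right, mul_div_cancel_left₀ _ (by linarith)] at this

theorem integral_unitSquare_rpow {p x : ℝ} (hp : 0 ≤ p) (hx : 1 ≤ x) :
    ∫ u in (0:ℝ)..1, ∫ s in (0:ℝ)..1, (x ^ p + (x + u - s) ^ p - (x + u) ^ p - (x - u) ^ p) =
      x ^ (p + 2) * rpowRemainder (p + 2) x⁻¹ / ((p + 1) * (p + 2)) := by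
  have hF (y : ℝ) :
      HasDerivAt (fun y => y ^ (p + 2) / (p + 2) / (p + 1)) (y ^ (p + 1) / (p + 1)) y := by
    simpa only [add_assoc, one_add_one_eq_two] using
      (hasDerivAt_rpow_add_one_div (p := p + 1) (by linarith) y).div_const (p + 1)
  rw [integral_unitSquare_eq_of_hasDerivAt (Real.continuous_rpow_const hp)
    (hasDerivAt_rpow_add_one_div hp) hF]
  have hx₀ : 0 < x := by linarith
  have hinv : x⁻¹ ≤ 1 := inv_le_one_of_one_le₀ hx
  have hxp (r : ℝ) : (x + 1) ^ r = x ^ r * (1 + x⁻¹) ^ r := by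
    rw [← Real.mul_rpow hx₀.le (by positivity), mul_add, mul_inv_cancel₀ hx₀.ne', mul_one]
  have hxm (r : ℝ) : (x - 1) ^ r = x ^ r * (1 - x⁻¹) ^ r := by
    rw [← Real.mul_rpow hx₀.le (by linarith), mul_sub, mul_inv_cancel₀ hx₀.ne', mul_one]
  have hx₁ : x ^ (p + 1) = x ^ p * x := Real.rpow_add_one hx₀.ne' p
  have hx₂ : x ^ (p + 2) = x ^ p * x ^ 2 := by rw [Real.rpow_add hx₀, Real.rpow_two]
  rw [rpowRemainder, show p + 2 - 1 = p + 1 by ring, hxp, hxp, hxm, hxm, hx₁, hx₂]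
  field_simp
  ring

theorem stmt5 (H : ℝ) (hH : H ∈ Set.Ioo (0:ℝ) 1) :
    Tendsto (fun x : ℝ =>
      ((∫ u in (0:ℝ)..1, ∫ s in (0:ℝ)..1,
          (x ^ (2*H) + (x + u - s) ^ (2*H) - (x + u) ^ (2*H) - (x - u) ^ (2*H)))
        - (-(H * (2*H - 1) / 2) * x ^ (2*H - 2))) / x ^ (2*H - 2))
      atTop (nhds 0) := by
  have hp : 0 ≤ 2 * H := by linarith [hH.1]
  have hp₁ : 2 * H + 1 ≠ 0 := by linarith
  have hp₂ : H + 1 ≠ 0 := by linarith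
  have hlim : Tendsto (fun x : ℝ => rpowRemainder (2 * H + 2) x⁻¹ / x⁻¹ ^ 4 /
      ((2 * H + 1) * (2 * H + 2)) + H * (2 * H - 1) / 2) atTop (𝓝 0) := by
    have := (((tendsto_rpowRemainder_div_pow_four (2 * H + 2)).div_const
      ((2 * H + 1) * (2 * H + 2))).add_const (H * (2 * H - 1) / 2)).comp
      (tendsto_inv_atTop_nhdsGT_zero.mono_right (nhdsGT_le_nhdsNE 0))
    have hzero : -((2 * H + 2) * (2 * H + 2 - 1) * (2 * H + 2 - 2) * (2 * H + 2 - 3)) / 4 /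
        ((2 * H + 1) * (2 * H + 2)) + H * (2 * H - 1) / 2 = 0 := by
      field_simp
      ring
    rwa [hzero] at this
  refine hlim.congr' ?_
  filter_upwards [eventually_ge_atTop 1] with x hx
  have hscale : x ^ (2 * H + 2) = x ^ (2 * H - 2) * x ^ 4 := by
    rw [← Real.rpow_natCast, ← Real.rpow_add (by linarith)]
    ring_nf
  rw [integral_unitSquare_rpow hp hx, hscale]
  field_simp
  ring
end

section
/- Let H ∈ (0,1). Then Θ(x) = x^{2H} + (1−2H)x² + o(x²) as x → 0⁺. In particular, Θ(x)/x^{2H} → 1 as x → 0⁺. -/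
open MeasureTheory Filter Set

open scoped Topology

/-! With `p = 2H`, the functions `φ t = t |t|^p / (p+1)` and `ψ t = |t|^(p+2) / ((p+1)(p+2))` are
successive antiderivatives of `|t|^p`, so both integrals defining `Θ` can be evaluated in closed
form: for `x ≥ 0`, `Θ(x) = x^p + R(x) - 2 ψ(x)` with
`R(y) = 2φ(1) - φ(1+y) - φ(1-y) + ψ(1+y) + ψ(1-y) - 2ψ(1)`.
The function `R` is differentiable near `0` with `R(0) = R'(0) = 0` and `R''(0) = 2 - 2p`, so
L'Hôpital gives `R(x)/x² → 1 - p`, while `ψ(x)/x² = |x|^p/((p+1)(p+2)) → 0`.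
Finally `Θ(x)/x^p = 1 + x^(2-p) (1 - p + o(1)) → 1` because `p < 2`. -/

theorem hasDerivAt_abs_rpow_of_ne_zero {t : ℝ} (p : ℝ) (ht : t ≠ 0) :
    HasDerivAt (fun t : ℝ => |t| ^ p) (SignType.sign t * p * |t| ^ (p - 1)) t :=
  (hasDerivAt_abs ht).rpow_const (Or.inl (abs_ne_zero.2 ht))

theorem hasDerivAt_mul_abs_rpow {p : ℝ} (hp : 0 ≤ p) (t : ℝ) :
    HasDerivAt (fun t : ℝ => t * |t| ^ p) ((p + 1) * |t| ^ p) t := by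
  rcases eq_or_ne t 0 with rfl | ht
  · rw [hasDerivAt_iff_tendsto_slope_zero]
    have hcont : Tendsto (fun t : ℝ => |t| ^ p) (𝓝[≠] 0) (𝓝 (|0| ^ p)) :=
      (continuous_abs.rpow_const fun _ => Or.inr hp).continuousAt.tendsto.mono_left
        nhdsWithin_le_nhds
    have hzero : (p + 1) * |(0:ℝ)| ^ p = |(0:ℝ)| ^ p := by
      rcases hp.eq_or_lt with rfl | hp
      · simp
      · simp [Real.zero_rpow hp.ne']
    rw [hzero]
    refine hcont.congr' (eventually_nhdsWithin_of_forall fun t (ht : t ≠ 0) => ?_)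
    simp [ht]
  · refine ((hasDerivAt_id' t).mul (hasDerivAt_abs_rpow_of_ne_zero p ht)).congr_deriv ?_
    rw [← mul_assoc, ← mul_assoc, self_mul_sign, mul_comm |t| p, mul_assoc,
      Real.rpow_sub_one (abs_ne_zero.2 ht), mul_div_cancel₀ _ (abs_ne_zero.2 ht)]
    ring

theorem tendsto_div_sq_of_hasDerivAt {f f' : ℝ → ℝ} {c : ℝ}
    (hf : ∀ᶠ y in 𝓝 0, HasDerivAt f (f' y) y) (hf0 : f 0 = 0) (hf'0 : f' 0 = 0)
    (hf' : HasDerivAt f' c 0) :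
    Tendsto (fun y => f y / y ^ 2) (𝓝[≠] 0) (𝓝 (c / 2)) := by
  have hslope : Tendsto (fun y => f' y / y) (𝓝[≠] 0) (𝓝 c) := by
    simpa [hf'0, div_eq_inv_mul] using hasDerivAt_iff_tendsto_slope_zero.1 hf'
  have hf_cont : Tendsto f (𝓝[≠] 0) (𝓝 0) := by
    simpa [hf0] using hf.self_of_nhds.continuousAt.tendsto.mono_left nhdsWithin_le_nhds
  have hsq : Tendsto (fun y : ℝ => y ^ 2) (𝓝[≠] 0) (𝓝 0) :=
    (continuous_pow 2).tendsto' 0 0 (zero_pow two_ne_zero) |>.mono_left nhdsWithin_le_nhds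
  refine HasDerivAt.lhopital_zero_nhdsNE (nhdsWithin_le_nhds hf)
    (Eventually.of_forall fun y => by simpa using hasDerivAt_pow 2 y)
    (eventually_nhdsWithin_of_forall fun y (hy : y ≠ 0) => by positivity) hf_cont hsq ?_
  refine (hslope.div_const 2).congr' (Eventually.of_forall fun y => ?_)
  rw [div_div, mul_comm]

noncomputable def absRpowAntideriv (p t : ℝ) : ℝ := t * |t| ^ p / (p + 1)

noncomputable def absRpowAntideriv₂ (p t : ℝ) : ℝ := |t| ^ (p + 2) / ((p + 1) * (p + 2))

local notation "φ" => absRpowAntideriv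
local notation "ψ" => absRpowAntideriv₂

section Antiderivatives

variable {p : ℝ}

theorem hasDerivAt_absRpowAntideriv (hp : 0 ≤ p) (t : ℝ) : HasDerivAt (φ p) (|t| ^ p) t :=
  ((hasDerivAt_mul_abs_rpow hp t).div_const (p + 1)).congr_deriv
    (mul_div_cancel_left₀ _ (by positivity))

theorem continuous_absRpowAntideriv (hp : 0 ≤ p) : Continuous (φ p) :=
  continuous_iff_continuousAt.2 fun t => (hasDerivAt_absRpowAntideriv hp t).continuousAt

theorem hasDerivAt_absRpowAntideriv₂ (hp : -1 < p) (t : ℝ) : HasDerivAt (ψ p) (φ p t) t := by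
  refine ((hasDerivAt_abs_rpow t (by linarith : 1 < p + 2)).div_const _).congr_deriv ?_
  have : p + 2 ≠ 0 := by linarith
  rw [add_sub_cancel_right, absRpowAntideriv]
  field_simp

theorem absRpowAntideriv_neg (p t : ℝ) : φ p (-t) = -φ p t := by
  simp [absRpowAntideriv, neg_div]

theorem absRpowAntideriv₂_neg (p t : ℝ) : ψ p (-t) = ψ p t := by
  simp [absRpowAntideriv₂]

theorem absRpowAntideriv_zero (p : ℝ) : φ p 0 = 0 := by
  simp [absRpowAntideriv]

theorem absRpowAntideriv₂_zero (hp : -1 < p) : ψ p 0 = 0 := by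
  simp [absRpowAntideriv₂, Real.zero_rpow (by linarith : p + 2 ≠ 0)]

theorem tendsto_absRpowAntideriv₂_div_sq (hp : 0 < p) :
    Tendsto (fun y => ψ p y / y ^ 2) (𝓝[≠] 0) (𝓝 0) := by
  have hcont : Tendsto (fun y : ℝ => |y| ^ p / ((p + 1) * (p + 2))) (𝓝 0) (𝓝 0) := by
    simpa [Real.zero_rpow hp.ne'] using
      ((continuous_abs.rpow_const fun _ => Or.inr hp.le).div_const ((p + 1) * (p + 2))).tendsto 0
  refine (hcont.mono_left nhdsWithin_le_nhds).congr'
    (eventually_nhdsWithin_of_forall fun y (hy : y ≠ 0) => ?_)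
  dsimp only
  rw [absRpowAntideriv₂, Real.rpow_add (abs_pos.2 hy), Real.rpow_two, sq_abs]
  field_simp

end Antiderivatives

theorem integral_theta_integrand {p : ℝ} (hp : 0 ≤ p) (x u : ℝ) :
    ∫ s in (0:ℝ)..1, (x ^ p + 2 * u ^ p + |s - u + x| ^ p - (u + x) ^ p - |u - x| ^ p - |u - s| ^ p)
      = x ^ p + 2 * u ^ p - (u + x) ^ p - |u - x| ^ p
        + φ p (1 - u + x) + φ p (u - 1) - φ p (x - u) - φ p u := by
  set c := x ^ p + 2 * u ^ p - (u + x) ^ p - |u - x| ^ p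
  have hderiv : ∀ s ∈ uIcc (0:ℝ) 1, HasDerivAt (fun s => c * s + φ p (s + (x - u)) + φ p (u - s))
      (x ^ p + 2 * u ^ p + |s - u + x| ^ p - (u + x) ^ p - |u - x| ^ p - |u - s| ^ p) s := by
    intro s _
    refine ((((hasDerivAt_id' s).const_mul c).add
      ((hasDerivAt_absRpowAntideriv hp _).comp_add_const s (x - u))).add
      ((hasDerivAt_absRpowAntideriv hp _).comp_const_sub u s)).congr_deriv ?_
    rw [show s + (x - u) = s - u + x by ring]
    ring
  have hcont : Continuous fun s : ℝ =>
      x ^ p + 2 * u ^ p + |s - u + x| ^ p - (u + x) ^ p - |u - x| ^ p - |u - s| ^ p := by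
    fun_prop (disch := exact fun _ => Or.inr hp)
  rw [intervalIntegral.integral_eq_sub_of_hasDerivAt hderiv (hcont.intervalIntegrable 0 1)]
  rw [show (1:ℝ) + (x - u) = 1 - u + x by ring, zero_add, sub_zero]
  ring

noncomputable def thetaRegularPart (p y : ℝ) : ℝ :=
  2 * φ p 1 - φ p (1 + y) - φ p (1 - y) + ψ p (1 + y) + ψ p (1 - y) - 2 * ψ p 1

noncomputable def thetaRegularPartDeriv (p y : ℝ) : ℝ :=
  |1 - y| ^ p - |1 + y| ^ p + φ p (1 + y) - φ p (1 - y)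

theorem theta_eq_rpow_add_regularPart_sub {H x : ℝ} (hH : 0 ≤ H) (hx : 0 ≤ x) :
    Theta H x = x ^ (2 * H) + thetaRegularPart (2 * H) x - 2 * ψ (2 * H) x := by
  set p := 2 * H
  have hp : 0 ≤ p := by positivity
  have hderiv : ∀ u ∈ uIcc (0:ℝ) 1, HasDerivAt
      (fun u => x ^ p * u + 2 * φ p u - φ p (u + x) - φ p (u - x)
        - ψ p (1 + x - u) + ψ p (u - 1) + ψ p (x - u) - ψ p u)
      (x ^ p + 2 * |u| ^ p - |u + x| ^ p - |u - x| ^ p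
        + φ p (1 - u + x) + φ p (u - 1) - φ p (x - u) - φ p u) u := by
    intro u _
    have hφ := hasDerivAt_absRpowAntideriv hp
    have hψ := hasDerivAt_absRpowAntideriv₂ (p := p) (by linarith)
    refine (((((((((hasDerivAt_id' u).const_mul (x ^ p)).add ((hφ u).const_mul 2)).sub
      ((hφ _).comp_add_const u x)).sub ((hφ _).comp_sub_const u x)).sub
      ((hψ _).comp_const_sub (1 + x) u)).add ((hψ _).comp_sub_const u 1)).add
      ((hψ _).comp_const_sub x u)).sub (hψ u)).congr_deriv ?_
    rw [show 1 + x - u = 1 - u + x by ring]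
    ring
  have hcont : Continuous fun u : ℝ => x ^ p + 2 * |u| ^ p - |u + x| ^ p - |u - x| ^ p
      + φ p (1 - u + x) + φ p (u - 1) - φ p (x - u) - φ p u := by
    have := continuous_absRpowAntideriv hp
    fun_prop (disch := exact fun _ => Or.inr hp)
  calc Theta H x
      = ∫ u in (0:ℝ)..1, (x ^ p + 2 * |u| ^ p - |u + x| ^ p - |u - x| ^ p
          + φ p (1 - u + x) + φ p (u - 1) - φ p (x - u) - φ p u) := by
        refine intervalIntegral.integral_congr fun u hu => ?_
        rw [uIcc_of_le zero_le_one] at hu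
        refine (integral_theta_integrand hp x u).trans ?_
        rw [abs_of_nonneg hu.1, abs_of_nonneg (add_nonneg hu.1 hx)]
    _ = x ^ p + thetaRegularPart p x - 2 * ψ p x := by
        rw [intervalIntegral.integral_eq_sub_of_hasDerivAt hderiv (hcont.intervalIntegrable 0 1)]
        have hψ0 : ψ p 0 = 0 := absRpowAntideriv₂_zero (by linarith)
        simp only [mul_one, mul_zero, zero_add, zero_sub, sub_zero, sub_self, add_sub_cancel_left,
          absRpowAntideriv_zero, hψ0, absRpowAntideriv_neg, absRpowAntideriv₂_neg]
        rw [show x - 1 = -(1 - x) by ring, absRpowAntideriv₂_neg, thetaRegularPart]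
        ring

section RegularPart

variable {p : ℝ}

theorem hasDerivAt_thetaRegularPart (hp : 0 ≤ p) (y : ℝ) :
    HasDerivAt (thetaRegularPart p) (thetaRegularPartDeriv p y) y := by
  have hφ := hasDerivAt_absRpowAntideriv hp
  have hψ := hasDerivAt_absRpowAntideriv₂ (p := p) (by linarith)
  refine ((((((hasDerivAt_const y (2 * φ p 1)).sub ((hφ _).comp_const_add 1 y)).sub
    ((hφ _).comp_const_sub 1 y)).add ((hψ _).comp_const_add 1 y)).add
    ((hψ _).comp_const_sub 1 y)).sub (hasDerivAt_const y (2 * ψ p 1))).congr_deriv ?_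
  rw [thetaRegularPartDeriv]
  ring

theorem thetaRegularPart_zero (p : ℝ) : thetaRegularPart p 0 = 0 := by
  simp only [thetaRegularPart, add_zero, sub_zero]
  ring

theorem thetaRegularPartDeriv_zero (p : ℝ) : thetaRegularPartDeriv p 0 = 0 := by
  simp [thetaRegularPartDeriv]

theorem hasDerivAt_thetaRegularPartDeriv_zero (hp : 0 ≤ p) :
    HasDerivAt (thetaRegularPartDeriv p) (2 - 2 * p) 0 := by
  have habs : HasDerivAt (fun t : ℝ => |t| ^ p) p 1 := by
    simpa using hasDerivAt_abs_rpow_of_ne_zero p one_ne_zero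
  have hφ : HasDerivAt (φ p) 1 1 := by
    simpa using hasDerivAt_absRpowAntideriv hp 1
  refine ((((HasDerivAt.comp_const_sub (1:ℝ) 0 (by simpa using habs)).sub
    (HasDerivAt.comp_const_add (1:ℝ) 0 (by simpa using habs))).add
    (HasDerivAt.comp_const_add (1:ℝ) 0 (by simpa using hφ))).sub
    (HasDerivAt.comp_const_sub (1:ℝ) 0 (by simpa using hφ))).congr_deriv ?_
  ring

theorem tendsto_thetaRegularPart_div_sq (hp : 0 ≤ p) :
    Tendsto (fun y => thetaRegularPart p y / y ^ 2) (𝓝[≠] 0) (𝓝 (1 - p)) := by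
  convert tendsto_div_sq_of_hasDerivAt (.of_forall (hasDerivAt_thetaRegularPart hp))
    (thetaRegularPart_zero p) (thetaRegularPartDeriv_zero p)
    (hasDerivAt_thetaRegularPartDeriv_zero hp) using 2
  ring

end RegularPart

theorem tendsto_theta_sub_expansion_div_sq {H : ℝ} (hH : 0 < H) :
    Tendsto (fun x : ℝ => (Theta H x - (x ^ (2*H) + (1 - 2*H) * x ^ 2)) / x ^ 2)
      (𝓝[>] 0) (𝓝 0) := by
  have h := (((tendsto_thetaRegularPart_div_sq (by positivity : 0 ≤ 2 * H)).sub
    ((tendsto_absRpowAntideriv₂_div_sq (by positivity : 0 < 2 * H)).const_mul 2)).sub_const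
    (1 - 2 * H)).mono_left (nhdsGT_le_nhdsNE 0)
  rw [mul_zero, sub_zero, sub_self] at h
  refine h.congr' (eventually_nhdsWithin_of_forall fun x (hx : 0 < x) => ?_)
  dsimp only
  rw [theta_eq_rpow_add_regularPart_sub hH.le hx.le]
  field_simp
  ring

theorem stmt6 (H : ℝ) (hH : H ∈ Set.Ioo (0:ℝ) 1) :
    Tendsto (fun x : ℝ => (Theta H x - (x ^ (2*H) + (1 - 2*H) * x ^ 2)) / x ^ 2)
        (nhdsWithin 0 (Set.Ioi 0)) (nhds 0) ∧
    Tendsto (fun x : ℝ => Theta H x / x ^ (2*H)) (nhdsWithin 0 (Set.Ioi 0)) (nhds 1) := by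
  obtain ⟨hH0, hH1⟩ := hH
  have expansion := tendsto_theta_sub_expansion_div_sq hH0
  refine ⟨expansion, ?_⟩
  have hpow : Tendsto (fun x : ℝ => x ^ (2 - 2 * H)) (𝓝[>] 0) (𝓝 0) := by
    have := (Real.continuousAt_rpow_const 0 (2 - 2 * H) (Or.inr (by linarith))).tendsto
    rw [Real.zero_rpow (by linarith)] at this
    exact this.mono_left nhdsWithin_le_nhds
  have h := ((expansion.add_const (1 - 2 * H)).mul hpow).const_add 1
  rw [zero_add, mul_zero, add_zero] at h
  refine h.congr' (eventually_nhdsWithin_of_forall fun x (hx : 0 < x) => ?_)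
  dsimp only
  rw [Real.rpow_sub hx, Real.rpow_two]
  field_simp
  ring
end

section
/- Let H ∈ (0,1). For every x ∈ (0,1), ∫_0^1 [2u^{2H} − (u+x)^{2H} − |u−x|^{2H}] du = ∫_{1−x}^1 u^{2H} du − ∫_1^{1+x} u^{2H} du, and consequently ∫_0^1 [2u^{2H} − (u+x)^{2H} − |u−x|^{2H}] du = −2H x² + o(x²) as x → 0⁺. -/
/-!
Substituting `u ↦ u + x` and splitting `|u - x|` at `u = x` turns every integral into an
integral of `f = (·) ^ (2H)` over an interval with endpoints in `{0, x, 1 - x, 1, 1 + x}`; they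
telescope to `∫_{1-x}^1 f - ∫_1^{1+x} f`. This is minus the second symmetric difference of a
primitive of `f` at `1`, so by l'Hôpital it behaves like `-f'(1) x² = -2H x²`.
-/

open MeasureTheory Filter Set Topology

namespace intervalIntegral

variable {E : Type*} [NormedAddCommGroup E] [NormedSpace ℝ E]

theorem integral_comp_abs_sub {f : ℝ → E} (hf : Continuous f) {x b : ℝ} (hx : 0 ≤ x)
    (hxb : x ≤ b) :
    ∫ u in (0 : ℝ)..b, f |u - x|
      = (∫ u in (0 : ℝ)..x, f u) + ∫ u in (0 : ℝ)..(b - x), f u := by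
  have hcont : Continuous fun u => f |u - x| := by fun_prop
  rw [← integral_add_adjacent_intervals (b := x) (hcont.intervalIntegrable _ _)
    (hcont.intervalIntegrable _ _)]
  have below : ∫ u in (0 : ℝ)..x, f |u - x| = ∫ u in (0 : ℝ)..x, f (x - u) := by
    refine integral_congr fun u hu => ?_
    rw [uIcc_of_le hx] at hu
    simp only [abs_of_nonpos (sub_nonpos.2 hu.2), neg_sub]
  have above : ∫ u in x..b, f |u - x| = ∫ u in x..b, f (u - x) := by
    refine integral_congr fun u hu => ?_
    rw [uIcc_of_le hxb] at hu
    simp only [abs_of_nonneg (sub_nonneg.2 hu.1)]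
  rw [below, above, integral_comp_sub_left, integral_comp_sub_right, sub_self, sub_zero]

theorem integral_two_mul_sub_comp_add_sub_comp_abs_sub {f : ℝ → ℝ} (hf : Continuous f)
    {x b : ℝ} (hx : 0 ≤ x) (hxb : x ≤ b) :
    ∫ u in (0 : ℝ)..b, (2 * f u - f (u + x) - f |u - x|)
      = (∫ u in (b - x)..b, f u) - ∫ u in b..(b + x), f u := by
  have hint : ∀ p q : ℝ, IntervalIntegrable f volume p q := hf.intervalIntegrable
  have from_zero : ∀ p q : ℝ,
      ∫ u in p..q, f u = (∫ u in (0 : ℝ)..q, f u) - ∫ u in (0 : ℝ)..p, f u :=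
    fun p q => (integral_interval_sub_left (hint 0 q) (hint 0 p)).symm
  have hdouble : Continuous fun u => 2 * f u := by fun_prop
  have hshift : Continuous fun u => f (u + x) := by fun_prop
  have hdiff : Continuous fun u => 2 * f u - f (u + x) := by fun_prop
  have habs : Continuous fun u => f |u - x| := by fun_prop
  rw [integral_sub (hdiff.intervalIntegrable _ _) (habs.intervalIntegrable _ _),
    integral_sub (hdouble.intervalIntegrable _ _) (hshift.intervalIntegrable _ _),
    integral_const_mul, integral_comp_add_right, integral_comp_abs_sub hf hx hxb, zero_add,
    from_zero x, from_zero (b - x) b, from_zero b (b + x)]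
  ring

end intervalIntegral

theorem HasDerivAt.tendsto_sub_div_two_mul {f : ℝ → ℝ} {f' a : ℝ} (hf : HasDerivAt f f' a) :
    Tendsto (fun t => (f (a + t) - f (a - t)) / (2 * t)) (𝓝[≠] 0) (𝓝 f') := by
  have hreflect : HasDerivAt (fun t => f (a - t)) (f' * -1) 0 :=
    (by simpa using hf : HasDerivAt f f' (a - 0)).comp 0
      (by simpa using (hasDerivAt_id (0 : ℝ)).const_sub a)
  have hlim := (hf.tendsto_slope_zero.sub hreflect.tendsto_slope_zero).div_const 2
  rw [show (f' - f' * -1) / 2 = f' by ring] at hlim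
  refine hlim.congr' (eventually_nhdsWithin_of_forall fun t (ht : t ≠ 0) => ?_)
  simp only [smul_eq_mul, zero_add, sub_zero]
  field_simp
  ring

theorem tendsto_integral_sub_integral_div_sq {f : ℝ → ℝ} {f' a : ℝ} (hf : Continuous f)
    (hderiv : HasDerivAt f f' a) :
    Tendsto (fun x => ((∫ u in (a - x)..a, f u) - ∫ u in a..(a + x), f u) / x ^ 2)
      (𝓝[>] 0) (𝓝 (-f')) := by
  have hprim : ∀ v, HasDerivAt (fun w => ∫ u in a..w, f u) (f v) v :=
    fun v => (hf.integral_hasStrictDerivAt a v).hasDerivAt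
  have hdiff : ∀ x, HasDerivAt (fun x => ((∫ u in (a - x)..a, f u) - ∫ u in a..(a + x), f u))
      (f (a - x) - f (a + x)) x := by
    intro x
    have hswap : (fun x => (∫ u in (a - x)..a, f u) - ∫ u in a..(a + x), f u)
        = fun x => -(∫ u in a..(a - x), f u) - ∫ u in a..(a + x), f u := by
      funext y
      rw [intervalIntegral.integral_symm]
    rw [hswap]
    exact (((hprim _).comp x ((hasDerivAt_id x).const_sub a)).neg.sub
      ((hprim _).comp x ((hasDerivAt_id x).const_add a))).congr_deriv (by simp only [id]; ring)
  have hdiff_zero : Tendsto (fun x => ((∫ u in (a - x)..a, f u) - ∫ u in a..(a + x), f u))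
      (𝓝[>] 0) (𝓝 0) := by
    have := ((hdiff 0).continuousAt.tendsto).mono_left (nhdsWithin_le_nhds (s := Ioi 0))
    simpa using this
  have hsq0 : Tendsto (fun x : ℝ => x ^ 2) (𝓝[>] 0) (𝓝 0) := by
    have := ((continuous_pow 2).tendsto (0 : ℝ)).mono_left (nhdsWithin_le_nhds (s := Ioi 0))
    simpa using this
  refine HasDerivAt.lhopital_zero_nhdsGT (f' := fun x => f (a - x) - f (a + x))
    (g' := fun x => 2 * x) (Eventually.of_forall hdiff)
    (Eventually.of_forall fun x => by simpa using hasDerivAt_pow 2 x)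
    (eventually_nhdsWithin_of_forall fun x (hx : 0 < x) => by positivity) hdiff_zero hsq0 ?_
  have := (hderiv.tendsto_sub_div_two_mul.mono_left (nhdsGT_le_nhdsNE 0)).neg
  refine this.congr fun x => ?_
  ring

theorem stmt7 (H : ℝ) (hH : H ∈ Set.Ioo (0:ℝ) 1) :
    (∀ x ∈ Set.Ioo (0:ℝ) 1,
      (∫ u in (0:ℝ)..1, (2 * u ^ (2*H) - (u + x) ^ (2*H) - |u - x| ^ (2*H)))
        = (∫ u in (1 - x)..1, u ^ (2*H)) - ∫ u in (1:ℝ)..(1 + x), u ^ (2*H)) ∧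
    Tendsto (fun x : ℝ =>
        ((∫ u in (0:ℝ)..1, (2 * u ^ (2*H) - (u + x) ^ (2*H) - |u - x| ^ (2*H)))
          - (-(2*H) * x ^ 2)) / x ^ 2)
      (nhdsWithin 0 (Set.Ioi 0)) (nhds 0) := by
  have hcont : Continuous fun u : ℝ => u ^ (2 * H) :=
    Real.continuous_rpow_const (by linarith [hH.1])
  have identity : ∀ x ∈ Ioo (0 : ℝ) 1,
      (∫ u in (0:ℝ)..1, (2 * u ^ (2*H) - (u + x) ^ (2*H) - |u - x| ^ (2*H)))
        = (∫ u in (1 - x)..1, u ^ (2*H)) - ∫ u in (1:ℝ)..(1 + x), u ^ (2*H) := fun x hx =>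
    intervalIntegral.integral_two_mul_sub_comp_add_sub_comp_abs_sub hcont hx.1.le hx.2.le
  refine ⟨identity, ?_⟩
  have hderiv : HasDerivAt (fun u : ℝ => u ^ (2 * H)) (2 * H) 1 := by
    simpa using Real.hasDerivAt_rpow_const (x := 1) (p := 2 * H) (Or.inl one_ne_zero)
  have hlim := (tendsto_integral_sub_integral_div_sq hcont hderiv).add_const (2 * H)
  rw [neg_add_cancel] at hlim
  refine hlim.congr' ?_
  filter_upwards [Ioo_mem_nhdsGT (zero_lt_one' ℝ)] with x hx
  have hx0 : x ≠ 0 := hx.1.ne'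
  rw [identity x hx]
  field_simp
  ring
end

section
/- Let H ∈ (0,1). Then ∫_0^1 ∫_0^1 [|u−s+x|^{2H} − |u−s|^{2H}] ds du = x² + o(x²) as x → 0⁺. -/
open MeasureTheory Filter Set Asymptotics Topology

/-! Let `K₁`, `K₂` be the first and second primitives of `k = |·| ^ (2H)`. Integrating twice gives
`∫∫ k (u - s + x) ds du = K₂ (x + 1) - 2 K₂ x + K₂ (x - 1)`. This central second difference of `K₂`
has first derivative `K₁ (x + 1) - 2 K₁ x + K₁ (x - 1)`, which vanishes at `0` because the primitive
`K₁` of the even function `k` is odd, and continuous second derivative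
`k (x + 1) - 2 k x + k (x - 1)`, equal to `2` at `0`. Taylor's formula to second order then gives
`x ^ 2 + o(x ^ 2)`. -/

theorem isLittleO_taylor_two_of_hasDerivAt {E : Type*} [NormedAddCommGroup E] [NormedSpace ℝ E]
    {f f' f'' : ℝ → E} {a : ℝ} (hf : ∀ x, HasDerivAt f (f' x) x)
    (hf' : ∀ x, HasDerivAt f' (f'' x) x) (hf'' : ContinuousAt f'' a) :
    (fun x => f x - f a - (x - a) • f' a - ((x - a) ^ 2 / 2) • f'' a) =o[𝓝 a]
      fun x => (x - a) ^ 2 := by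
  have hg' (x : ℝ) : HasDerivAt (fun x => f' x - (x - a) • f'' a) (f'' x - f'' a) x := by
    simpa using (hf' x).fun_sub (((hasDerivAt_id x).sub_const a).smul_const (f'' a))
  have hg (x : ℝ) : HasDerivAt (fun x => f x - (x - a) • f' a - ((x - a) ^ 2 / 2) • f'' a)
      (f' x - (x - a) • f'' a - f' a) x := by
    refine (((hf x).fun_sub (((hasDerivAt_id x).sub_const a).smul_const (f' a))).fun_sub
      (((((hasDerivAt_id x).sub_const a).pow 2).div_const 2).smul_const (f'' a))).congr_deriv ?_
    simp only [id_eq, one_smul, Nat.cast_ofNat]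
    module
  have h₂ : (fun x => f'' x - f'' a) =o[𝓝[univ] a] fun x => (x - a) ^ 0 := by
    simpa [isLittleO_one_iff, tendsto_sub_nhds_zero_iff] using hf''.tendsto
  have h₁ := Convex.isLittleO_pow_succ_real convex_univ (mem_univ a)
    (fun x _ => (hg' x).hasDerivWithinAt) h₂
  have h₀ := Convex.isLittleO_pow_succ_real convex_univ (mem_univ a) (n := 1)
    (fun x _ => (hg x).hasDerivWithinAt) (by simpa using h₁)
  rw [← nhdsWithin_univ]
  exact h₀.congr_left fun x => by
    simp only [sub_self, zero_smul, sub_zero, zero_pow two_ne_zero, zero_div]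
    abel

def centralSecondDiff (F : ℝ → ℝ) (x : ℝ) : ℝ := F (x + 1) - 2 * F x + F (x - 1)

theorem hasDerivAt_centralSecondDiff {F F' : ℝ → ℝ} (hF : ∀ t, HasDerivAt F (F' t) t) (x : ℝ) :
    HasDerivAt (centralSecondDiff F) (centralSecondDiff F' x) x :=
  (((hF (x + 1)).comp_add_const x 1).sub ((hF x).const_mul 2)).add
    ((hF (x - 1)).comp_sub_const x 1)

section DoubleIntegral

variable {k K₁ K₂ : ℝ → ℝ}

theorem integral_integral_sub_eq_centralSecondDiff (hk : Continuous k)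
    (hK₁ : ∀ t, HasDerivAt K₁ (k t) t) (hK₂ : ∀ t, HasDerivAt K₂ (K₁ t) t) (x : ℝ) :
    ∫ u in (0:ℝ)..1, ∫ s in (0:ℝ)..1, (k (u - s + x) - k (u - s)) =
      centralSecondDiff K₂ x - centralSecondDiff K₂ 0 := by
  have hK₁c : Continuous K₁ := continuous_iff_continuousAt.2 fun t => (hK₁ t).continuousAt
  have inner (u : ℝ) : ∫ s in (0:ℝ)..1, (k (u - s + x) - k (u - s)) =
      K₁ (u + x) - K₁ (u + x - 1) - K₁ u + K₁ (u - 1) := by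
    have hderiv (s : ℝ) : HasDerivAt (fun s => K₁ (u - s) - K₁ (u - s + x))
        (k (u - s + x) - k (u - s)) s := by
      refine ((hK₁ (u - s)).comp_const_sub u s |>.sub
        ((hK₁ (u - s + x)).comp_add_const (u - s) x |>.comp_const_sub u s)).congr_deriv ?_
      ring
    rw [intervalIntegral.integral_eq_sub_of_hasDerivAt (fun s _ => hderiv s)
      ((by fun_prop : Continuous fun s => k (u - s + x) - k (u - s)).intervalIntegrable _ _)]
    ring_nf
  have outer (u : ℝ) : HasDerivAt (fun u => K₂ (u + x) - K₂ (u + x - 1) - K₂ u + K₂ (u - 1))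
      (K₁ (u + x) - K₁ (u + x - 1) - K₁ u + K₁ (u - 1)) u :=
    ((((hK₂ (u + x)).comp_add_const u x).sub
      ((hK₂ (u + x - 1)).comp_sub_const (u + x) 1 |>.comp_add_const u x)).sub (hK₂ u)).add
      ((hK₂ (u - 1)).comp_sub_const u 1)
  simp_rw [inner]
  rw [intervalIntegral.integral_eq_sub_of_hasDerivAt (fun u _ => outer u)
    ((by fun_prop : Continuous fun u => K₁ (u + x) - K₁ (u + x - 1) - K₁ u + K₁ (u - 1)
      ).intervalIntegrable _ _)]
  simp only [centralSecondDiff]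
  ring_nf

theorem isLittleO_integral_integral_sub_of_even (hk : Continuous k)
    (heven : ∀ t, k (-t) = k t) :
    (fun x => (∫ u in (0:ℝ)..1, ∫ s in (0:ℝ)..1, (k (u - s + x) - k (u - s)))
      - (k 1 - k 0) * x ^ 2) =o[𝓝 0] fun x => x ^ 2 := by
  set K₁ : ℝ → ℝ := fun t => ∫ s in (0:ℝ)..t, k s
  have hK₁ (t : ℝ) : HasDerivAt K₁ (k t) t := (hk.integral_hasStrictDerivAt 0 t).hasDerivAt
  have hK₁c : Continuous K₁ := continuous_iff_continuousAt.2 fun t => (hK₁ t).continuousAt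
  have hK₂ (t : ℝ) : HasDerivAt (fun t => ∫ s in (0:ℝ)..t, K₁ s) (K₁ t) t :=
    (hK₁c.integral_hasStrictDerivAt 0 t).hasDerivAt
  have hK₁_zero : K₁ 0 = 0 := intervalIntegral.integral_same
  have hK₁_neg_one : K₁ (-1) = -K₁ 1 := by
    have h := intervalIntegral.integral_comp_neg (a := 0) (b := 1) k
    simp only [heven, neg_zero] at h
    simp only [K₁, h, intervalIntegral.integral_symm (-1) 0]
  have taylor := isLittleO_taylor_two_of_hasDerivAt (hasDerivAt_centralSecondDiff hK₂)
    (hasDerivAt_centralSecondDiff hK₁) (a := 0) (by unfold centralSecondDiff; fun_prop)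
  refine taylor.congr' ?_ (by simp)
  filter_upwards with x
  rw [integral_integral_sub_eq_centralSecondDiff hk hK₁ hK₂]
  simp only [centralSecondDiff, zero_add, zero_sub, sub_zero, smul_eq_mul, hK₁_neg_one,
    hK₁_zero, heven]
  ring

end DoubleIntegral

theorem stmt10 (H : ℝ) (hH : H ∈ Set.Ioo (0:ℝ) 1) :
    Tendsto (fun x : ℝ =>
      ((∫ u in (0:ℝ)..1, ∫ s in (0:ℝ)..1, (|u - s + x| ^ (2*H) - |u - s| ^ (2*H)))
        - x ^ 2) / x ^ 2)
      (nhdsWithin 0 (Set.Ioi 0)) (nhds 0) := by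
  have hp : 0 < 2 * H := by linarith [hH.1]
  have h := isLittleO_integral_integral_sub_of_even (k := fun t => |t| ^ (2 * H))
    ((Real.continuous_rpow_const hp.le).comp continuous_abs) (fun t => by simp only [abs_neg])
  simpa [Real.zero_rpow hp.ne'] using h.tendsto_div_nhds_zero.mono_left nhdsWithin_le_nhds
end

section
/- Let H ∈ (0,1) and let X : [0,∞) × Ω → ℝ be a jointly measurable, centered, square-integrable stochastic process on a probability space (Ω, F, P) with continuous sample paths such that E[X(s)X(t)] = R_H(s,t) for all s, t ≥ 0. Then for every δ > 0 and every t ≥ 0, E[(Δ_δX(t))²] = δ^{2H} Θ(t/δ). -/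
open MeasureTheory Filter Set

/-- Wong–Zakai error process: `Δ_δω(t) = (1/δ)∫_0^t (ω(s+δ) − ω(s)) ds − ω(t)`. -/
noncomputable def WZerr (δ : ℝ) (ω : ℝ → ℝ) (t : ℝ) : ℝ :=
  (1 / δ) * (∫ s in (0:ℝ)..t, (ω (s + δ) - ω s)) - ω t

/-- Covariance function of fractional Brownian motion with Hurst index `H`. -/
noncomputable def fbmCov (H : ℝ) (s t : ℝ) : ℝ :=
  (s ^ (2*H) + t ^ (2*H) - |t - s| ^ (2*H)) / 2

/-!
Shifting `s ↦ s + δ` telescopes `∫₀ᵗ (X(s+δ) − X(s)) ds` into `∫ₜ^{t+δ} X − ∫₀^δ X`, and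
rescaling by `δ` writes `Δ_δX(t)` as the average over `v ∈ [0,1]` of the increment
`X(t+δv) − X(δv) − X(t)`. By Fubini the second moment is the integral over `[0,1]²` of the
covariance of two such increments. With `t = δx`, self-similarity
`R_H(δa, δb) = δ^{2H} R_H(a, b)` pulls out `δ^{2H}`, and the nine covariance terms add up to the
symmetrisation of the integrand of `Θ(x)`, whose integral over the square is `Θ(x)`.
-/

lemma WZerr_eq_intervalIntegral {δ t : ℝ} {f : ℝ → ℝ} (hf : ContinuousOn f (Ici 0))
    (hδ : 0 < δ) (ht : 0 ≤ t) :
    WZerr δ f t = ∫ v in (0:ℝ)..1, (f (t + δ * v) - f (δ * v) - f t) := by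
  have hint : ∀ a b : ℝ, 0 ≤ a → 0 ≤ b → IntervalIntegrable f volume a b := fun a b ha hb =>
    (hf.mono fun y hy => le_trans (le_min ha hb) hy.1).intervalIntegrable
  have hrescale : ∀ a : ℝ, 0 ≤ a →
      IntervalIntegrable (fun v => f (a + δ * v)) volume 0 1 ∧
        ∫ v in (0:ℝ)..1, f (a + δ * v) = δ⁻¹ * ∫ s in a..a + δ, f s := by
    refine fun a ha => ⟨?_, by simp [intervalIntegral.integral_comp_add_mul f hδ.ne']⟩
    refine (hf.comp (by fun_prop : Continuous fun v => a + δ * v).continuousOn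
      fun v hv => ?_).intervalIntegrable
    have : 0 ≤ v := le_trans (by simp) hv.1
    simp only [mem_Ici]
    positivity
  obtain ⟨hint_t, hresc_t⟩ := hrescale t ht
  obtain ⟨hint_0, hresc_0⟩ := hrescale 0 le_rfl
  simp only [zero_add] at hint_0 hresc_0
  have htelescope : ∫ s in (0:ℝ)..t, (f (s + δ) - f s)
      = (∫ s in t..t + δ, f s) - ∫ s in (0:ℝ)..δ, f s := by
    rw [intervalIntegral.integral_sub _ (hint _ _ le_rfl ht),
      intervalIntegral.integral_comp_add_right, zero_add,
      intervalIntegral.integral_interval_sub_interval_comm' (hint _ _ hδ.le (by positivity))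
        (hint _ _ le_rfl ht) (hint _ _ hδ.le le_rfl)]
    simpa using (hint δ (t + δ) hδ.le (by positivity)).comp_add_right δ
  rw [WZerr, htelescope, intervalIntegral.integral_sub (hint_t.sub hint_0) intervalIntegrable_const,
    intervalIntegral.integral_sub hint_t hint_0, hresc_t, hresc_0,
    intervalIntegral.integral_const, sub_zero, one_smul]
  field_simp

section SecondMoment

variable {Ω : Type*} [MeasurableSpace Ω] {P : Measure Ω}

lemma integral_norm_mul_le_of_memLp_two {f g : Ω → ℝ} (hf : MemLp f 2 P) (hg : MemLp g 2 P) :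
    ∫ ω, ‖f ω * g ω‖ ∂P ≤ ((∫ ω, f ω ^ 2 ∂P) + ∫ ω, g ω ^ 2 ∂P) / 2 := by
  rw [← integral_add hf.integrable_sq hg.integrable_sq, ← integral_div]
  refine integral_mono (hf.integrable_mul hg).norm
    ((hf.integrable_sq.add hg.integrable_sq).div_const 2) fun ω => ?_
  have := two_mul_le_add_sq |f ω| |g ω|
  rw [sq_abs, sq_abs] at this
  simp only [Real.norm_eq_abs, abs_mul]
  linarith

lemma integral_sum_mul_sum_of_memLp_two {ι κ : Type*} (s : Finset ι) (t : Finset κ)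
    (c : ι → ℝ) (d : κ → ℝ) {f : ι → Ω → ℝ} {g : κ → Ω → ℝ}
    (hf : ∀ i ∈ s, MemLp (f i) 2 P) (hg : ∀ j ∈ t, MemLp (g j) 2 P) :
    ∫ ω, (∑ i ∈ s, c i * f i ω) * (∑ j ∈ t, d j * g j ω) ∂P
      = ∑ i ∈ s, ∑ j ∈ t, c i * d j * ∫ ω, f i ω * g j ω ∂P := by
  have hfg : ∀ i ∈ s, ∀ j ∈ t, Integrable (fun ω => c i * f i ω * (d j * g j ω)) P := by
    intro i hi j hj
    convert ((hf i hi).integrable_mul (hg j hj)).const_mul (c i * d j) using 2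
    simp only [Pi.mul_apply]
    ring
  simp_rw [Finset.sum_mul_sum]
  rw [integral_finsetSum _ fun i hi => integrable_finsetSum _ fun j hj => hfg i hi j hj]
  refine Finset.sum_congr rfl fun i hi => ?_
  rw [integral_finsetSum _ fun j hj => hfg i hi j hj]
  refine Finset.sum_congr rfl fun j _ => ?_
  rw [← integral_const_mul]
  congr with ω
  ring

lemma integral_sq_integral_eq_integral_prod_integral_mul {α : Type*} [MeasurableSpace α]
    {μ : Measure α} [IsFiniteMeasure μ] [SFinite P] {Y : α → Ω → ℝ}
    (hY : Measurable (Function.uncurry Y)) (hL2 : ∀ᵐ a ∂μ, MemLp (Y a) 2 P)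
    (hmoment : Integrable (fun a => ∫ ω, Y a ω ^ 2 ∂P) μ) :
    ∫ ω, (∫ a, Y a ω ∂μ) ^ 2 ∂P = ∫ p : α × α, ∫ ω, Y p.1 ω * Y p.2 ω ∂P ∂μ.prod μ := by
  have hmeas : Measurable fun q : (α × α) × Ω => Y q.1.1 q.2 * Y q.1.2 q.2 :=
    (hY.comp (measurable_fst.fst.prodMk measurable_snd)).mul
      (hY.comp (measurable_fst.snd.prodMk measurable_snd))
  have hL2_prod : ∀ᵐ p ∂μ.prod μ, MemLp (Y p.1) 2 P ∧ MemLp (Y p.2) 2 P :=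
    (Measure.quasiMeasurePreserving_fst.ae hL2).and
      (Measure.quasiMeasurePreserving_snd.ae hL2)
  have hint : Integrable (fun q : (α × α) × Ω => Y q.1.1 q.2 * Y q.1.2 q.2)
      ((μ.prod μ).prod P) := by
    refine (integrable_prod_iff hmeas.aestronglyMeasurable).2 ⟨?_, ?_⟩
    · filter_upwards [hL2_prod] with p hp using hp.1.integrable_mul hp.2
    refine Integrable.mono' (((hmoment.comp_fst μ).add (hmoment.comp_snd μ)).div_const 2)
      hmeas.aestronglyMeasurable.norm.integral_prod_right' ?_
    filter_upwards [hL2_prod] with p hp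
    rw [Real.norm_of_nonneg (integral_nonneg fun _ => norm_nonneg _)]
    exact integral_norm_mul_le_of_memLp_two hp.1 hp.2
  calc ∫ ω, (∫ a, Y a ω ∂μ) ^ 2 ∂P
      = ∫ ω, ∫ p : α × α, Y p.1 ω * Y p.2 ω ∂μ.prod μ ∂P := by
        refine integral_congr_ae (ae_of_all _ fun ω => ?_)
        exact (sq _).trans (integral_prod_mul _ _).symm
    _ = ∫ p : α × α, ∫ ω, Y p.1 ω * Y p.2 ω ∂P ∂μ.prod μ :=
        (integral_integral_swap hint).symm

end SecondMoment

section FractionalBrownian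

variable {H : ℝ}

lemma fbmCov_self (hH : 0 < H) (a : ℝ) : fbmCov H a a = a ^ (2 * H) := by
  simp [fbmCov, Real.zero_rpow (by positivity : 2 * H ≠ 0)]

lemma fbmCov_mul_mul {c a b : ℝ} (hc : 0 ≤ c) (ha : 0 ≤ a) (hb : 0 ≤ b) :
    fbmCov H (c * a) (c * b) = c ^ (2 * H) * fbmCov H a b := by
  simp only [fbmCov]
  rw [← mul_sub, abs_mul, abs_of_nonneg hc, Real.mul_rpow hc ha, Real.mul_rpow hc hb,
    Real.mul_rpow hc (abs_nonneg _)]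
  ring

noncomputable def thetaIntegrand (H x s u : ℝ) : ℝ :=
  x ^ (2*H) + 2 * u ^ (2*H) + |s - u + x| ^ (2*H)
    - (u + x) ^ (2*H) - |u - x| ^ (2*H) - |u - s| ^ (2*H)

lemma fbmCov_wongZakai_expansion (hH : 0 < H) {x s u : ℝ} (hs : 0 ≤ s) (hu : 0 ≤ u) :
    fbmCov H (x + s) (x + u) - fbmCov H (x + s) u - fbmCov H (x + s) x
      - fbmCov H s (x + u) + fbmCov H s u + fbmCov H s x
      - fbmCov H x (x + u) + fbmCov H x u + fbmCov H x x
      = (thetaIntegrand H x s u + thetaIntegrand H x u s) / 2 := by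
  rw [fbmCov_self hH]
  simp only [fbmCov, thetaIntegrand]
  rw [show x + u - (x + s) = u - s by ring, show u - (x + s) = -(s - u + x) by ring,
    show x - (x + s) = -s by ring, show x + u - s = u - s + x by ring,
    show x + u - x = u by ring, abs_neg, abs_neg, abs_of_nonneg hs, abs_of_nonneg hu,
    abs_sub_comm x s, abs_sub_comm s u]
  ring_nf

lemma continuous_thetaIntegrand (hH : 0 ≤ H) (x : ℝ) :
    Continuous fun p : ℝ × ℝ => thetaIntegrand H x p.1 p.2 := by
  have := Real.continuous_rpow_const (by positivity : 0 ≤ 2 * H)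
  unfold thetaIntegrand
  fun_prop

lemma integral_prod_symmetrize {α : Type*} [MeasurableSpace α] {μ : Measure α} [SFinite μ]
    {g : α × α → ℝ} (hg : Integrable g (μ.prod μ)) :
    ∫ p, (g p + g p.swap) / 2 ∂μ.prod μ = ∫ p, g p ∂μ.prod μ := by
  rw [integral_div, integral_add hg (hg.swap : Integrable (fun p => g p.swap) _),
    integral_prod_swap]
  ring

lemma Theta_eq_integral_prod (hH : 0 ≤ H) (x : ℝ) :
    Theta H x = ∫ p, (thetaIntegrand H x p.1 p.2 + thetaIntegrand H x p.2 p.1) / 2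
      ∂(volume.restrict (Ioc (0:ℝ) 1)).prod (volume.restrict (Ioc (0:ℝ) 1)) := by
  have hint : Integrable (fun p : ℝ × ℝ => thetaIntegrand H x p.2 p.1)
      ((volume.restrict (Ioc (0:ℝ) 1)).prod (volume.restrict (Ioc (0:ℝ) 1))) := by
    rw [Measure.prod_restrict, ← Measure.volume_eq_prod]
    exact (((continuous_thetaIntegrand hH x).comp continuous_swap).continuousOn.integrableOn_compact
      (isCompact_Icc.prod isCompact_Icc)).mono_set
      (prod_mono Ioc_subset_Icc_self Ioc_subset_Icc_self)
  calc Theta H x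
      = ∫ p, thetaIntegrand H x p.2 p.1
          ∂(volume.restrict (Ioc (0:ℝ) 1)).prod (volume.restrict (Ioc (0:ℝ) 1)) := by
        rw [integral_prod _ hint, Theta, intervalIntegral.integral_of_le zero_le_one]
        simp_rw [intervalIntegral.integral_of_le zero_le_one]
        rfl
    _ = _ := by
        rw [← integral_prod_symmetrize hint]
        simp_rw [Prod.fst_swap, Prod.snd_swap, add_comm]

end FractionalBrownian

section Increment

variable {Ω : Type*} [MeasurableSpace Ω] {P : Measure Ω} {H : ℝ} {X : ℝ → Ω → ℝ}

noncomputable def wzIncrement (X : ℝ → Ω → ℝ) (δ x v : ℝ) (ω : Ω) : ℝ :=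
  X (δ * x + δ * v) ω - X (δ * v) ω - X (δ * x) ω

lemma measurable_uncurry_wzIncrement (hmeas : Measurable fun p : ℝ × Ω => X p.1 p.2)
    (δ x : ℝ) : Measurable (Function.uncurry (wzIncrement X δ x)) :=
  ((hmeas.comp (by fun_prop : Measurable fun q : ℝ × Ω => (δ * x + δ * q.1, q.2))).sub
    (hmeas.comp (by fun_prop : Measurable fun q : ℝ × Ω => (δ * q.1, q.2)))).sub
    (hmeas.comp (by fun_prop : Measurable fun q : ℝ × Ω => (δ * x, q.2)))

lemma memLp_wzIncrement (hL2 : ∀ t ≥ (0:ℝ), MemLp (X t) 2 P) {δ x v : ℝ} (hδ : 0 ≤ δ)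
    (hx : 0 ≤ x) (hv : 0 ≤ v) : MemLp (wzIncrement X δ x v) 2 P :=
  ((hL2 _ (by positivity)).sub (hL2 _ (by positivity))).sub (hL2 _ (by positivity))

lemma integral_wzIncrement_mul (hH : 0 < H)
    (hL2 : ∀ t ≥ (0:ℝ), MemLp (X t) 2 P)
    (hcov : ∀ s ≥ (0:ℝ), ∀ t ≥ (0:ℝ), ∫ ω, X s ω * X t ω ∂P = fbmCov H s t)
    {δ x s u : ℝ} (hδ : 0 ≤ δ) (hs : 0 ≤ s) (hu : 0 ≤ u) (hx : 0 ≤ x) :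
    ∫ ω, wzIncrement X δ x s ω * wzIncrement X δ x u ω ∂P
      = δ ^ (2 * H) * ((thetaIntegrand H x s u + thetaIntegrand H x u s) / 2) := by
  set w : Fin 3 → ℝ := ![1, -1, -1]
  set a : ℝ → Fin 3 → ℝ := fun v => ![x + v, v, x]
  have ha : ∀ v, 0 ≤ v → ∀ i, 0 ≤ a v i := by
    intro v hv i
    fin_cases i <;>
      simp only [a, Fin.zero_eta, Fin.mk_one, Fin.reduceFinMk, Fin.isValue, Matrix.cons_val_zero,
        Matrix.cons_val_one, Matrix.cons_val] <;>
      positivity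
  have hsum : ∀ v ω, wzIncrement X δ x v ω = ∑ i, w i * X (δ * a v i) ω := by
    intro v ω
    simp only [wzIncrement, w, a, Fin.sum_univ_three, Fin.isValue, Matrix.cons_val_zero,
      Matrix.cons_val_one, Matrix.cons_val, mul_add, one_mul, neg_mul]
    ring
  have hL2a : ∀ v, 0 ≤ v → ∀ i ∈ Finset.univ, MemLp (X (δ * a v i)) 2 P :=
    fun v hv i _ => hL2 _ (mul_nonneg hδ (ha v hv i))
  simp only [hsum]
  rw [integral_sum_mul_sum_of_memLp_two _ _ _ _ (hL2a s hs) (hL2a u hu),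
    ← fbmCov_wongZakai_expansion hH hs hu]
  simp only [hcov _ (mul_nonneg hδ (ha s hs _)) _ (mul_nonneg hδ (ha u hu _)),
    fbmCov_mul_mul hδ (ha s hs _) (ha u hu _)]
  simp only [w, a, Fin.sum_univ_three, Fin.isValue, Matrix.cons_val_zero, Matrix.cons_val_one,
    Matrix.cons_val, mul_one, one_mul, mul_neg, neg_mul, neg_neg]
  ring

lemma integrable_integral_wzIncrement_sq (hH : 0 < H)
    (hL2 : ∀ t ≥ (0:ℝ), MemLp (X t) 2 P)
    (hcov : ∀ s ≥ (0:ℝ), ∀ t ≥ (0:ℝ), ∫ ω, X s ω * X t ω ∂P = fbmCov H s t)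
    {δ x : ℝ} (hδ : 0 ≤ δ) (hx : 0 ≤ x) :
    Integrable (fun v => ∫ ω, wzIncrement X δ x v ω ^ 2 ∂P) (volume.restrict (Ioc (0:ℝ) 1)) := by
  have hk := continuous_thetaIntegrand hH.le x
  have hcont : Continuous fun v =>
      δ ^ (2 * H) * ((thetaIntegrand H x v v + thetaIntegrand H x v v) / 2) := by
    fun_prop
  refine (hcont.integrableOn_Icc.mono_set Ioc_subset_Icc_self).congr ?_
  refine ae_restrict_of_forall_mem measurableSet_Ioc fun v hv => ?_
  simp_rw [sq, integral_wzIncrement_mul hH hL2 hcov hδ hv.1.le hv.1.le hx]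

end Increment

theorem stmt11_general {Ω : Type*} [MeasurableSpace Ω] (P : Measure Ω) [IsProbabilityMeasure P]
    (H : ℝ) (hH : H ∈ Set.Ioo (0:ℝ) 1)
    (X : ℝ → Ω → ℝ)
    (hmeas : Measurable fun p : ℝ × Ω => X p.1 p.2)
    (hcont : ∀ ω, ContinuousOn (fun t => X t ω) (Set.Ici 0))
    (hL2 : ∀ t ≥ (0:ℝ), MemLp (X t) 2 P)
    (hcov : ∀ s ≥ (0:ℝ), ∀ t ≥ (0:ℝ), ∫ ω, X s ω * X t ω ∂P = fbmCov H s t) :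
    ∀ δ > (0:ℝ), ∀ t ≥ (0:ℝ),
      ∫ ω, (WZerr δ (fun s => X s ω) t) ^ 2 ∂P = δ ^ (2*H) * Theta H (t / δ) := by
  intro δ hδ t ht
  obtain ⟨x, hx, rfl⟩ : ∃ x, 0 ≤ x ∧ t = δ * x := ⟨t / δ, by positivity, by field_simp⟩
  rw [mul_div_cancel_left₀ x hδ.ne']
  have hIoc : ∀ᵐ v ∂volume.restrict (Ioc (0:ℝ) 1), 0 ≤ v :=
    ae_restrict_of_forall_mem measurableSet_Ioc fun v hv => hv.1.le
  calc ∫ ω, WZerr δ (fun s => X s ω) (δ * x) ^ 2 ∂P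
      = ∫ ω, (∫ v in Ioc (0:ℝ) 1, wzIncrement X δ x v ω) ^ 2 ∂P := by
        congr with ω
        rw [WZerr_eq_intervalIntegral (hcont ω) hδ (by positivity),
          intervalIntegral.integral_of_le zero_le_one]
        rfl
    _ = ∫ p, ∫ ω, wzIncrement X δ x p.1 ω * wzIncrement X δ x p.2 ω ∂P
          ∂(volume.restrict (Ioc (0:ℝ) 1)).prod (volume.restrict (Ioc (0:ℝ) 1)) :=
        integral_sq_integral_eq_integral_prod_integral_mul
          (measurable_uncurry_wzIncrement hmeas δ x)
          (hIoc.mono fun v hv => memLp_wzIncrement hL2 hδ.le hx hv)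
          (integrable_integral_wzIncrement_sq hH.1 hL2 hcov hδ.le hx)
    _ = ∫ p, δ ^ (2 * H) * ((thetaIntegrand H x p.1 p.2 + thetaIntegrand H x p.2 p.1) / 2)
          ∂(volume.restrict (Ioc (0:ℝ) 1)).prod (volume.restrict (Ioc (0:ℝ) 1)) := by
        refine integral_congr_ae ?_
        filter_upwards [Measure.quasiMeasurePreserving_fst.ae hIoc,
          Measure.quasiMeasurePreserving_snd.ae hIoc] with p hs hu
        exact integral_wzIncrement_mul hH.1 hL2 hcov hδ.le hs hu hx
    _ = δ ^ (2 * H) * Theta H x := by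
        rw [integral_const_mul, Theta_eq_integral_prod hH.1.le]

theorem stmt11 {Ω : Type*} [MeasurableSpace Ω] (P : Measure Ω) [IsProbabilityMeasure P]
    (H : ℝ) (hH : H ∈ Set.Ioo (0:ℝ) 1)
    (X : ℝ → Ω → ℝ)
    (hmeas : Measurable fun p : ℝ × Ω => X p.1 p.2)
    (hcont : ∀ ω, ContinuousOn (fun t => X t ω) (Set.Ici 0))
    (hL2 : ∀ t ≥ (0:ℝ), MemLp (X t) 2 P)
    (hcentered : ∀ t ≥ (0:ℝ), ∫ ω, X t ω ∂P = 0)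
    (hcov : ∀ s ≥ (0:ℝ), ∀ t ≥ (0:ℝ), ∫ ω, X s ω * X t ω ∂P = fbmCov H s t) :
    ∀ δ > (0:ℝ), ∀ t ≥ (0:ℝ),
      ∫ ω, (WZerr δ (fun s => X s ω) t) ^ 2 ∂P = δ ^ (2*H) * Theta H (t / δ) :=
  stmt11_general P H hH X hmeas hcont hL2 hcov
end

section
/- Fix 0 ≤ α < 1 and a, b ≥ 0. Let x : [0,∞) → [0,∞) be a continuous function such that for each t ≥ 0, x(t) ≤ a + b t^α ∫_0^t (t−s)^{−α} s^{−α} x(s) ds. Then for all t ≥ 0, x(t) ≤ a Γ(1−α) ∑_{n=0}^∞ (b Γ(1−α) t^{1−α})^n / Γ((n+1)(1−α)), where Γ denotes the Gamma function. -/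
/-!
Fix `t ≥ 0` and a bound `M` for `x` on `[0, t]`, and write `δ = 1 - α`. By the Beta integral
`∫₀ᵘ (u - s)^(-α) s^(-α) s^(kδ) ds = B((k + 1)δ, δ) u^((k + 1)δ - α)`, the positive operator
`V f (u) = b u^α ∫₀ᵘ (u - s)^(-α) s^(-α) f(s) ds` maps `e_k(u) = Γ(δ) (b Γ(δ) u^δ)^k / Γ((k + 1)δ)`
to `e_(k+1)`, and `e_0 = 1`. Iterating `x ≤ a + V x` therefore gives
`x ≤ a (e_0 + ⋯ + e_(n-1)) + M e_n` on `[0, t]`. Log-convexity of `Γ` gives `Γ(w) / Γ(w + δ) → 0`,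
so `∑ e_k(t)` converges by the ratio test, `e_n(t) → 0`, and the bound follows in the limit.
-/

open MeasureTheory Filter Set Topology Real

theorem Real.Gamma_add_one_le_Gamma_add_mul_rpow {δ w : ℝ} (hδ0 : 0 < δ) (hδ1 : δ ≤ 1)
    (hw : 0 < w + δ) : Gamma (w + 1) ≤ Gamma (w + δ) * (w + δ) ^ (1 - δ) := by
  rcases hδ1.lt_or_eq with hδ1 | rfl
  · have hG : 0 < Gamma (w + δ) := Gamma_pos_of_pos hw
    -- log-convexity at `w + 1 = δ (w + δ) + (1 - δ) (w + δ + 1)`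
    have h := Gamma_mul_add_mul_le_rpow_Gamma_mul_rpow_Gamma hw (by linarith : 0 < w + δ + 1)
      hδ0 (sub_pos.2 hδ1) (add_sub_cancel δ 1)
    calc Gamma (w + 1) = Gamma (δ * (w + δ) + (1 - δ) * (w + δ + 1)) := by ring_nf
      _ ≤ Gamma (w + δ) ^ δ * Gamma (w + δ + 1) ^ (1 - δ) := h
      _ = Gamma (w + δ) * (w + δ) ^ (1 - δ) := by
        rw [Gamma_add_one hw.ne', mul_rpow hw.le hG.le, mul_left_comm, ← rpow_add hG,
          add_sub_cancel, rpow_one, mul_comm]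
  · simp

theorem Real.tendsto_Gamma_div_Gamma_add_atTop {δ : ℝ} (hδ0 : 0 < δ) (hδ1 : δ ≤ 1) :
    Tendsto (fun w => Gamma w / Gamma (w + δ)) atTop (𝓝 0) := by
  have hupper : ∀ᶠ w in atTop, Gamma w / Gamma (w + δ) ≤ (1 + δ / w) * (w + δ) ^ (-δ) := by
    filter_upwards [eventually_gt_atTop 0] with w hw
    have hwδ : 0 < w + δ := by linarith
    have h := Gamma_add_one_le_Gamma_add_mul_rpow hδ0 hδ1 hwδ
    rw [Gamma_add_one hw.ne'] at h
    rw [div_le_iff₀ (Gamma_pos_of_pos hwδ)]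
    calc Gamma w = w * Gamma w / w := by field_simp
      _ ≤ Gamma (w + δ) * (w + δ) ^ (1 - δ) / w := by gcongr
      _ = (1 + δ / w) * (w + δ) ^ (-δ) * Gamma (w + δ) := by
        rw [sub_eq_add_neg, rpow_add hwδ, rpow_one]
        field_simp
  have hlim : Tendsto (fun w => (1 + δ / w) * (w + δ) ^ (-δ)) atTop (𝓝 0) := by
    have h1 : Tendsto (fun w => 1 + δ / w) atTop (𝓝 1) := by
      simpa using (tendsto_const_nhds (x := (1 : ℝ))).add
        ((tendsto_const_nhds (x := δ)).div_atTop tendsto_id)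
    have h2 : Tendsto (fun w => (w + δ) ^ (-δ)) atTop (𝓝 0) :=
      (tendsto_rpow_neg_atTop hδ0).comp (tendsto_atTop_add_const_right _ δ tendsto_id)
    simpa using h1.mul h2
  refine tendsto_of_tendsto_of_tendsto_of_le_of_le' tendsto_const_nhds hlim ?_ hupper
  filter_upwards [eventually_gt_atTop 0] with w hw
  exact div_nonneg (Gamma_pos_of_pos hw).le (Gamma_pos_of_pos (by linarith)).le

theorem summable_pow_div_Gamma_mul {δ : ℝ} (hδ0 : 0 < δ) (hδ1 : δ ≤ 1) (z : ℝ) :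
    Summable (fun n : ℕ => z ^ n / Gamma ((n + 1) * δ)) := by
  have hw : Tendsto (fun n : ℕ => ((n : ℝ) + 1) * δ) atTop atTop :=
    (tendsto_atTop_add_const_right _ 1 tendsto_natCast_atTop_atTop).atTop_mul_const hδ0
  have hratio := ((tendsto_Gamma_div_Gamma_add_atTop hδ0 hδ1).comp hw).const_mul ‖z‖
  rw [mul_zero] at hratio
  refine summable_of_ratio_norm_eventually_le (r := 1 / 2) (by norm_num) ?_
  filter_upwards [hratio.eventually (ge_mem_nhds (by norm_num : (0 : ℝ) < 1 / 2))] with n hn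
  have hG : 0 < Gamma ((n + 1) * δ) := Gamma_pos_of_pos (by positivity)
  have hG' : 0 < Gamma ((n + 1 + 1) * δ) := Gamma_pos_of_pos (by positivity)
  simp only [Function.comp_apply] at hn
  rw [show ((n : ℝ) + 1) * δ + δ = (n + 1 + 1) * δ by ring] at hn
  push_cast
  rw [norm_div, norm_div, norm_pow, norm_pow, Real.norm_of_nonneg hG.le,
    Real.norm_of_nonneg hG'.le]
  calc ‖z‖ ^ (n + 1) / Gamma ((n + 1 + 1) * δ)
      = ‖z‖ * Gamma ((n + 1) * δ) / Gamma ((n + 1 + 1) * δ) * (‖z‖ ^ n / Gamma ((n + 1) * δ)) := by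
        field_simp; ring
    _ ≤ 1 / 2 * (‖z‖ ^ n / Gamma ((n + 1) * δ)) := by
        gcongr ?_ * _
        rwa [mul_div_assoc]

theorem intervalIntegrable_rpow_mul_sub_rpow {p q T : ℝ} (hp : 0 < p) (hq : 0 < q) (hT : 0 < T) :
    IntervalIntegrable (fun s => s ^ (p - 1) * (T - s) ^ (q - 1)) volume 0 T := by
  -- each factor is singular at one endpoint only, so split at `T / 2`
  have hleft : IntervalIntegrable (fun s => s ^ (p - 1) * (T - s) ^ (q - 1)) volume 0 (T / 2) := by
    refine (intervalIntegral.intervalIntegrable_rpow' (by linarith)).mul_continuousOn ?_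
    refine ContinuousOn.rpow_const (by fun_prop) fun s hs => Or.inl ?_
    rw [uIcc_of_le (by linarith)] at hs
    linarith [hs.2]
  have hright : IntervalIntegrable (fun s => s ^ (p - 1) * (T - s) ^ (q - 1)) volume (T / 2) T := by
    have h := (intervalIntegral.intervalIntegrable_rpow' (a := 0) (b := T / 2)
      (r := q - 1) (by linarith)).comp_sub_left T
    rw [sub_zero, sub_half] at h
    refine h.symm.continuousOn_mul (ContinuousOn.rpow_const (by fun_prop) fun s hs => Or.inl ?_)
    rw [uIcc_of_le (by linarith)] at hs
    linarith [hs.1]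
  exact hleft.trans hright

theorem integral_rpow_mul_sub_rpow {p q T : ℝ} (hp : 0 < p) (hq : 0 < q) (hT : 0 < T) :
    ∫ s in (0 : ℝ)..T, s ^ (p - 1) * (T - s) ^ (q - 1)
      = ProbabilityTheory.beta p q * T ^ (p + q - 1) := by
  have hcomplex := Complex.betaIntegral_scaled p q hT
  rw [Complex.betaIntegral_eq_Gamma_mul_div _ _ (by simpa) (by simpa), ← Complex.ofReal_add,
    Complex.Gamma_ofReal, Complex.Gamma_ofReal, Complex.Gamma_ofReal] at hcomplex
  apply Complex.ofReal_injective
  rw [← intervalIntegral.integral_ofReal]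
  have hpointwise : EqOn (fun s : ℝ => ((s ^ (p - 1) * (T - s) ^ (q - 1) : ℝ) : ℂ))
      (fun s : ℝ => (s : ℂ) ^ ((p : ℂ) - 1) * ((T : ℂ) - s) ^ ((q : ℂ) - 1)) (uIcc 0 T) := by
    intro s hs
    rw [uIcc_of_le hT.le] at hs
    push_cast [Complex.ofReal_cpow hs.1, Complex.ofReal_cpow (sub_nonneg.2 hs.2)]
    rfl
  rw [intervalIntegral.integral_congr hpointwise, hcomplex, ProbabilityTheory.beta]
  push_cast [Complex.ofReal_cpow hT.le]
  ring

noncomputable def gronwallKernel (α u s : ℝ) : ℝ := (u - s) ^ (-α) * s ^ (-α)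

theorem gronwallKernel_nonneg (α : ℝ) {u s : ℝ} (hs : s ∈ Icc 0 u) : 0 ≤ gronwallKernel α u s :=
  mul_nonneg (rpow_nonneg (sub_nonneg.2 hs.2) _) (rpow_nonneg hs.1 _)

theorem gronwallKernel_mul_rpow_eq {α u s : ℝ} (p : ℝ) (hs : 0 < s) :
    gronwallKernel α u s * s ^ (p - (1 - α)) = s ^ (p - 1) * (u - s) ^ (1 - α - 1) := by
  rw [gronwallKernel, mul_assoc, ← rpow_add hs, sub_sub_cancel_left]
  ring_nf

theorem intervalIntegrable_gronwallKernel_mul_rpow {α u p : ℝ} (hα : α < 1) (hp : 0 < p)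
    (hu : 0 < u) :
    IntervalIntegrable (fun s => gronwallKernel α u s * s ^ (p - (1 - α))) volume 0 u := by
  refine (intervalIntegrable_rpow_mul_sub_rpow hp (sub_pos.2 hα) hu).congr_uIoo fun s hs => ?_
  rw [uIoo_of_le hu.le] at hs
  exact (gronwallKernel_mul_rpow_eq p hs.1).symm

theorem integral_gronwallKernel_mul_rpow {α u p : ℝ} (hα : α < 1) (hp : 0 < p) (hu : 0 < u) :
    ∫ s in (0 : ℝ)..u, gronwallKernel α u s * s ^ (p - (1 - α))
      = ProbabilityTheory.beta p (1 - α) * u ^ (p - α) := by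
  have hcongr : EqOn (fun s => gronwallKernel α u s * s ^ (p - (1 - α)))
      (fun s => s ^ (p - 1) * (u - s) ^ (1 - α - 1)) (uIoo 0 u) := fun s hs => by
    rw [uIoo_of_le hu.le] at hs
    exact gronwallKernel_mul_rpow_eq p hs.1
  rw [intervalIntegral.integral_congr_uIoo hcongr,
    integral_rpow_mul_sub_rpow hp (sub_pos.2 hα) hu]
  ring_nf

noncomputable def gronwallTerm (α b : ℝ) (k : ℕ) (u : ℝ) : ℝ :=
  Gamma (1 - α) * ((b * Gamma (1 - α) * u ^ (1 - α)) ^ k / Gamma ((k + 1) * (1 - α)))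

theorem gronwallTerm_zero {α : ℝ} (hα : α < 1) (b u : ℝ) : gronwallTerm α b 0 u = 1 := by
  simp [gronwallTerm, (Gamma_pos_of_pos (sub_pos.2 hα)).ne']

theorem gronwallTerm_eq_mul_rpow (α b : ℝ) (k : ℕ) {u : ℝ} (hu : 0 ≤ u) :
    gronwallTerm α b k u = Gamma (1 - α) * (b * Gamma (1 - α)) ^ k / Gamma ((k + 1) * (1 - α))
      * u ^ ((k + 1) * (1 - α) - (1 - α)) := by
  rw [gronwallTerm, mul_pow, ← rpow_mul_natCast hu, add_one_mul, add_sub_cancel_right,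
    mul_comm _ (k : ℝ)]
  ring

theorem intervalIntegrable_gronwallKernel_mul_gronwallTerm {α u : ℝ} (hα : α < 1) (b : ℝ) (k : ℕ)
    (hu : 0 ≤ u) :
    IntervalIntegrable (fun s => gronwallKernel α u s * gronwallTerm α b k s) volume 0 u := by
  rcases hu.eq_or_lt with rfl | hu
  · exact IntervalIntegrable.refl
  refine ((intervalIntegrable_gronwallKernel_mul_rpow hα (p := (k + 1) * (1 - α))
    (by nlinarith) hu).const_mul
    (Gamma (1 - α) * (b * Gamma (1 - α)) ^ k / Gamma ((k + 1) * (1 - α)))).congr_uIoo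
    fun s hs => ?_
  rw [uIoo_of_le hu.le] at hs
  simp only [gronwallTerm_eq_mul_rpow α b k hs.1.le]
  ring

theorem gronwallKernel_integral_gronwallTerm {α u : ℝ} (hα : α < 1) (b : ℝ) (k : ℕ) (hu : 0 ≤ u) :
    b * u ^ α * ∫ s in (0 : ℝ)..u, gronwallKernel α u s * gronwallTerm α b k s
      = gronwallTerm α b (k + 1) u := by
  have hδ : 0 < 1 - α := sub_pos.2 hα
  rcases hu.eq_or_lt with rfl | hu
  · simp [gronwallTerm, zero_rpow hδ.ne']
  set C := Gamma (1 - α) * (b * Gamma (1 - α)) ^ k / Gamma ((k + 1) * (1 - α)) with hC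
  have hcongr : EqOn (fun s => gronwallKernel α u s * gronwallTerm α b k s)
      (fun s => C * (gronwallKernel α u s * s ^ ((k + 1) * (1 - α) - (1 - α)))) (uIoo 0 u) :=
    fun s hs => by
      rw [uIoo_of_le hu.le] at hs
      simp only [gronwallTerm_eq_mul_rpow α b k hs.1.le]
      ring
  have hGk : Gamma ((k + 1) * (1 - α)) ≠ 0 := (Gamma_pos_of_pos (by positivity)).ne'
  rw [intervalIntegral.integral_congr_uIoo hcongr, intervalIntegral.integral_const_mul,
    integral_gronwallKernel_mul_rpow hα (by positivity) hu, gronwallTerm_eq_mul_rpow α b _ hu.le,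
    ProbabilityTheory.beta]
  have hpow : u ^ α * u ^ ((k + 1) * (1 - α) - α) = u ^ ((k + 1 + 1) * (1 - α) - (1 - α)) := by
    rw [← rpow_add hu]
    ring_nf
  push_cast
  rw [show ((k : ℝ) + 1) * (1 - α) + (1 - α) = (k + 1 + 1) * (1 - α) by ring, ← hpow, hC]
  field_simp
  ring

theorem gronwallKernel_integral_majorant {α u : ℝ} (hα : α < 1) (a b M : ℝ) (n : ℕ) (hu : 0 ≤ u) :
    IntervalIntegrable (fun s => gronwallKernel α u s *
        (a * ∑ k ∈ Finset.range n, gronwallTerm α b k s + M * gronwallTerm α b n s)) volume 0 u ∧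
      a + b * u ^ α * ∫ s in (0 : ℝ)..u, gronwallKernel α u s *
          (a * ∑ k ∈ Finset.range n, gronwallTerm α b k s + M * gronwallTerm α b n s)
        = a * ∑ k ∈ Finset.range (n + 1), gronwallTerm α b k u
          + M * gronwallTerm α b (n + 1) u := by
  have hterm k := intervalIntegrable_gronwallKernel_mul_gronwallTerm hα b k hu
  have hsum : IntervalIntegrable
      (fun s => ∑ k ∈ Finset.range n, gronwallKernel α u s * gronwallTerm α b k s) volume 0 u := by
    simpa only [Finset.sum_fn] using IntervalIntegrable.sum _ fun k _ => hterm k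
  have hexpand : (fun s => gronwallKernel α u s *
        (a * ∑ k ∈ Finset.range n, gronwallTerm α b k s + M * gronwallTerm α b n s))
      = fun s => a * ∑ k ∈ Finset.range n, gronwallKernel α u s * gronwallTerm α b k s
          + M * (gronwallKernel α u s * gronwallTerm α b n s) := by
    ext s
    rw [mul_add, mul_left_comm _ M, mul_left_comm _ a, Finset.mul_sum]
  have hI k := gronwallKernel_integral_gronwallTerm hα b k hu
  refine ⟨hexpand ▸ (hsum.const_mul a).add ((hterm n).const_mul M), ?_⟩
  rw [hexpand, intervalIntegral.integral_add (hsum.const_mul a) ((hterm n).const_mul M),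
    intervalIntegral.integral_const_mul, intervalIntegral.integral_const_mul,
    intervalIntegral.integral_finsetSum fun k _ => hterm k, Finset.sum_range_succ',
    gronwallTerm_zero hα]
  simp only [← hI]
  rw [← Finset.mul_sum]
  ring

theorem le_sum_gronwallTerm_add {α a b t M : ℝ} {x : ℝ → ℝ} (hα : α < 1) (hb : 0 ≤ b)
    (hcont : ContinuousOn x (Icc 0 t))
    (hineq : ∀ u ∈ Icc 0 t, x u ≤ a + b * u ^ α * ∫ s in (0 : ℝ)..u, gronwallKernel α u s * x s)
    (hM : ∀ u ∈ Icc 0 t, x u ≤ M) (n : ℕ) :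
    ∀ u ∈ Icc 0 t,
      x u ≤ a * ∑ k ∈ Finset.range n, gronwallTerm α b k u + M * gronwallTerm α b n u := by
  induction n with
  | zero => simpa [gronwallTerm_zero hα] using hM
  | succ n ih =>
    intro u hu
    have hsub : uIcc 0 u ⊆ Icc 0 t := by
      rw [uIcc_of_le hu.1]
      exact Icc_subset_Icc_right hu.2
    have hKx : IntervalIntegrable (fun s => gronwallKernel α u s * x s) volume 0 u := by
      simpa [gronwallTerm_zero hα] using
        (intervalIntegrable_gronwallKernel_mul_gronwallTerm hα b 0 hu.1).mul_continuousOn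
          (hcont.mono hsub)
    obtain ⟨hKmajorant, hstep⟩ := gronwallKernel_integral_majorant hα a b M n hu.1
    calc x u ≤ a + b * u ^ α * ∫ s in (0 : ℝ)..u, gronwallKernel α u s * x s := hineq u hu
      _ ≤ a + b * u ^ α * ∫ s in (0 : ℝ)..u, gronwallKernel α u s *
            (a * ∑ k ∈ Finset.range n, gronwallTerm α b k s + M * gronwallTerm α b n s) := by
        gcongr a + ?_
        refine mul_le_mul_of_nonneg_left ?_ (mul_nonneg hb (rpow_nonneg hu.1 _))
        refine intervalIntegral.integral_mono_on hu.1 hKx hKmajorant fun s hs => ?_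
        exact mul_le_mul_of_nonneg_left (ih s (hsub (Icc_subset_uIcc hs)))
          (gronwallKernel_nonneg α hs)
      _ = _ := hstep

theorem stmt19_general (α a b : ℝ) (hα0 : 0 ≤ α) (hα1 : α < 1) (hb : 0 ≤ b)
    (x : ℝ → ℝ) (hcont : ContinuousOn x (Set.Ici 0))
    (hineq : ∀ t ≥ (0:ℝ),
      x t ≤ a + b * t ^ α * ∫ s in (0:ℝ)..t, (t - s) ^ (-α) * s ^ (-α) * x s) :
    ∀ t ≥ (0:ℝ),
      x t ≤ a * Real.Gamma (1 - α) *
        ∑' n : ℕ, (b * Real.Gamma (1 - α) * t ^ (1 - α)) ^ n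
            / Real.Gamma ((n + 1) * (1 - α)) := by
  intro t ht
  have hcont' : ContinuousOn x (Icc 0 t) := hcont.mono Icc_subset_Ici_self
  obtain ⟨M, hM⟩ := isCompact_Icc.exists_bound_of_continuousOn hcont'
  have hbound n := le_sum_gronwallTerm_add hα1 hb hcont' (fun u hu => hineq u hu.1)
    (fun u hu => (le_abs_self _).trans (hM u hu)) n t ⟨ht, le_rfl⟩
  have hsum : Summable fun k => gronwallTerm α b k t :=
    (summable_pow_div_Gamma_mul (sub_pos.2 hα1) (by linarith) _).mul_left _
  have hlim := (hsum.hasSum.tendsto_sum_nat.const_mul a).add (hsum.tendsto_atTop_zero.const_mul M)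
  rw [mul_zero, add_zero] at hlim
  calc x t ≤ a * ∑' k, gronwallTerm α b k t := ge_of_tendsto' hlim hbound
    _ = _ := by simp only [gronwallTerm, tsum_mul_left, mul_assoc]

theorem stmt19 (α a b : ℝ) (hα0 : 0 ≤ α) (hα1 : α < 1) (ha : 0 ≤ a) (hb : 0 ≤ b)
    (x : ℝ → ℝ) (hcont : ContinuousOn x (Set.Ici 0))
    (hnonneg : ∀ t ≥ (0:ℝ), 0 ≤ x t)
    (hineq : ∀ t ≥ (0:ℝ),
      x t ≤ a + b * t ^ α * ∫ s in (0:ℝ)..t, (t - s) ^ (-α) * s ^ (-α) * x s) :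
    ∀ t ≥ (0:ℝ),
      x t ≤ a * Real.Gamma (1 - α) *
        ∑' n : ℕ, (b * Real.Gamma (1 - α) * t ^ (1 - α)) ^ n
            / Real.Gamma ((n + 1) * (1 - α)) :=
  stmt19_general α a b hα0 hα1 hb x hcont hineq
end
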